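/- arXiv:1104.3508 — 4 statements merged into one kernel-verified Lean document; each statement's English description precedes it below -/
import Mathlib

section
/- Let g₀, g₁, g₂ : ℝ → ℝ be smooth and let χ₁, χ₂ : ℝ → ℝ be smooth solutions of χ'' + 2g₂χ = 0 satisfying χ₁(t)χ₂'(t) − χ₁'(t)χ₂(t) = 1 for all t. Define φ₁ = χ₁², φ₂ = χ₂², φ₃ = 2χ₁χ₂; C_j(t) = ∫₀ᵗ χ_j g₁ for j = 1,2; A₁ = −χ₁C₁, A₂ = −χ₂C₂, A₃ = −(χ₁C₂ + χ₂C₁); D₁ = −C₁²/2, D₂ = −C₂²/2, D₃ = −C₁C₂; B_j(t,x) = −(i/4)φ_j''(t)x² − i A_j'(t)x + (1/4)φ_j'(t) + i g₀(t)φ_j(t) + i D_j(t); and for smooth f : ℝ² → ℂ set (L_j f)(t,x) = (−1)^{j+1}( φ_j(t) ∂_t f(t,x) + ((1/2)φ_j'(t)x + A_j(t)) ∂_x f(t,x) + B_j(t,x) f(t,x) ). Then for every smooth f : ℝ² → ℂ one has the operator bracket relations [L₃,L₁]f = −2L₁f, [L₃,L₂]f = 2L₂f, and [L₂,L₁]f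 = L₃f, where [L,M]f = L(Mf) − M(Lf). -/
open Complex

/-- Partial derivative in the first (time) variable. -/
noncomputable def pderivT (f : ℝ → ℝ → ℂ) (t x : ℝ) : ℂ := deriv (fun t' => f t' x) t

/-- Partial derivative in the second (space) variable. -/
noncomputable def pderivX (f : ℝ → ℝ → ℂ) (t x : ℝ) : ℂ := deriv (fun x' => f t x') x

/-- `C_j(t) = ∫₀ᵗ χ_j g₁`. -/
noncomputable def Cint (χ g₁ : ℝ → ℝ) (t : ℝ) : ℝ := ∫ u in (0:ℝ)..t, χ u * g₁ u

/-- `B(t,x) = -(i/4)φ''(t)x² - i A'(t)x + (1/4)φ'(t) + i g₀(t)φ(t) + i D(t)`. -/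
noncomputable def Bcoef (g₀ φ A D : ℝ → ℝ) (t x : ℝ) : ℂ :=
  -(I / 4) * ((deriv (deriv φ) t : ℝ) : ℂ) * (x : ℂ) ^ 2 - I * ((deriv A t : ℝ) : ℂ) * (x : ℂ)
    + (1/4 : ℂ) * ((deriv φ t : ℝ) : ℂ) + I * (g₀ t : ℂ) * (φ t : ℂ) + I * (D t : ℂ)

/-- `(L f)(t,x) = sgn (φ(t) ∂_t f + ((1/2)φ'(t)x + A(t)) ∂_x f + B(t,x) f)`. -/
noncomputable def Lop (sgn : ℂ) (φ A : ℝ → ℝ) (B : ℝ → ℝ → ℂ) (f : ℝ → ℝ → ℂ)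
    (t x : ℝ) : ℂ :=
  sgn * ((φ t : ℂ) * pderivT f t x
    + ((1/2 : ℂ) * ((deriv φ t : ℝ) : ℂ) * (x : ℂ) + (A t : ℂ)) * pderivX f t x
    + B t x * f t x)

/-- `L₁`, with `φ₁ = χ₁²`, `A₁ = -χ₁C₁`, `D₁ = -C₁²/2`, sign `(-1)^{1+1} = 1`. -/
noncomputable def Lone (g₀ g₁ χ₁ : ℝ → ℝ) : (ℝ → ℝ → ℂ) → ℝ → ℝ → ℂ :=
  Lop 1 (fun t => χ₁ t ^ 2) (fun t => -(χ₁ t * Cint χ₁ g₁ t))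
    (Bcoef g₀ (fun t => χ₁ t ^ 2) (fun t => -(χ₁ t * Cint χ₁ g₁ t))
      (fun t => -(Cint χ₁ g₁ t ^ 2) / 2))

/-- `L₂`, with `φ₂ = χ₂²`, `A₂ = -χ₂C₂`, `D₂ = -C₂²/2`, sign `(-1)^{2+1} = -1`. -/
noncomputable def Ltwo (g₀ g₁ χ₂ : ℝ → ℝ) : (ℝ → ℝ → ℂ) → ℝ → ℝ → ℂ :=
  Lop (-1) (fun t => χ₂ t ^ 2) (fun t => -(χ₂ t * Cint χ₂ g₁ t))
    (Bcoef g₀ (fun t => χ₂ t ^ 2) (fun t => -(χ₂ t * Cint χ₂ g₁ t))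
      (fun t => -(Cint χ₂ g₁ t ^ 2) / 2))

/-- `L₃`, with `φ₃ = 2χ₁χ₂`, `A₃ = -(χ₁C₂ + χ₂C₁)`, `D₃ = -C₁C₂`, sign `(-1)^{3+1} = 1`. -/
noncomputable def Lthree (g₀ g₁ χ₁ χ₂ : ℝ → ℝ) : (ℝ → ℝ → ℂ) → ℝ → ℝ → ℂ :=
  Lop 1 (fun t => 2 * χ₁ t * χ₂ t)
    (fun t => -(χ₁ t * Cint χ₂ g₁ t + χ₂ t * Cint χ₁ g₁ t))
    (Bcoef g₀ (fun t => 2 * χ₁ t * χ₂ t)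
      (fun t => -(χ₁ t * Cint χ₂ g₁ t + χ₂ t * Cint χ₁ g₁ t))
      (fun t => -(Cint χ₁ g₁ t * Cint χ₂ g₁ t)))


open scoped ContDiff

section SL2Aux


noncomputable def pt (G : ℝ × ℝ → ℂ) : ℝ × ℝ → ℂ := fun p => fderiv ℝ G p (1, 0)
noncomputable def px (G : ℝ × ℝ → ℂ) : ℝ × ℝ → ℂ := fun p => fderiv ℝ G p (0, 1)

lemma infty_add_one : (∞ : WithTop ℕ∞) + 1 ≤ ∞ := by
  rw [show (∞ : WithTop ℕ∞) + 1 = ∞ from rfl]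

lemma one_le_infty : (1 : WithTop ℕ∞) ≤ ∞ := by exact_mod_cast le_top

lemma smooth_pt {G : ℝ × ℝ → ℂ} (hG : ContDiff ℝ ∞ G) : ContDiff ℝ ∞ (pt G) :=
  (hG.fderiv_right infty_add_one).clm_apply contDiff_const

lemma smooth_px {G : ℝ × ℝ → ℂ} (hG : ContDiff ℝ ∞ G) : ContDiff ℝ ∞ (px G) :=
  (hG.fderiv_right infty_add_one).clm_apply contDiff_const

lemma hasDerivAt_T {G : ℝ × ℝ → ℂ} (hG : ContDiff ℝ ∞ G) (t x : ℝ) :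
    HasDerivAt (fun t' => G (t', x)) (pt G (t, x)) t := by
  have h1 : HasDerivAt (fun t' : ℝ => (t', x)) ((1 : ℝ), (0 : ℝ)) t :=
    HasDerivAt.prodMk (hasDerivAt_id t) (hasDerivAt_const t x)
  have h2 := (hG.differentiable (by simp) (t, x)).hasFDerivAt
  exact h2.comp_hasDerivAt t h1

lemma hasDerivAt_X {G : ℝ × ℝ → ℂ} (hG : ContDiff ℝ ∞ G) (t x : ℝ) :
    HasDerivAt (fun x' => G (t, x')) (px G (t, x)) x := by
  have h1 : HasDerivAt (fun x' : ℝ => (t, x')) ((0 : ℝ), (1 : ℝ)) x :=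
    HasDerivAt.prodMk (hasDerivAt_const x t) (hasDerivAt_id x)
  have h2 := (hG.differentiable (by simp) (t, x)).hasFDerivAt
  exact h2.comp_hasDerivAt x h1

lemma symm_ptpx {G : ℝ × ℝ → ℂ} (hG : ContDiff ℝ ∞ G) (p : ℝ × ℝ) :
    pt (px G) p = px (pt G) p := by
  have hd : Differentiable ℝ (fderiv ℝ G) :=
    (hG.fderiv_right infty_add_one).differentiable (by simp)
  have hsymm := second_derivative_symmetric
    (fun y => (hG.differentiable (by simp) y).hasFDerivAt) (hd p).hasFDerivAt (1,0) (0,1)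
  have e1 : pt (px G) p = (fderiv ℝ (fderiv ℝ G) p) (1,0) (0,1) := by
    show fderiv ℝ (fun q => fderiv ℝ G q (0,1)) p (1,0) = _
    rw [fderiv_clm_apply (hd p) (differentiableAt_const _)]
    simp
  have e2 : px (pt G) p = (fderiv ℝ (fderiv ℝ G) p) (0,1) (1,0) := by
    show fderiv ℝ (fun q => fderiv ℝ G q (1,0)) p (0,1) = _
    rw [fderiv_clm_apply (hd p) (differentiableAt_const _)]
    simp
  rw [e1, e2, hsymm]


lemma smooth_deriv {u : ℝ → ℝ} (hu : ContDiff ℝ ∞ u) : ContDiff ℝ ∞ (deriv u) :=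
  (contDiff_infty_iff_deriv.mp hu).2

lemma hR {u : ℝ → ℝ} (hu : ContDiff ℝ ∞ u) (t : ℝ) :
    HasDerivAt (fun t' => ((u t' : ℝ) : ℂ)) ((deriv u t : ℝ) : ℂ) t :=
  ((hu.differentiable (by simp) t).hasDerivAt).ofReal_comp

lemma LopT {φ A g₀ D : ℝ → ℝ} {f : ℝ → ℝ → ℂ}
    (hφ : ContDiff ℝ ∞ φ) (hA : ContDiff ℝ ∞ A) (hg₀ : ContDiff ℝ ∞ g₀)
    (hD : ContDiff ℝ ∞ D) (hF : ContDiff ℝ ∞ (fun p : ℝ × ℝ => f p.1 p.2))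
    (s : ℂ) (t x : ℝ) :
    pderivT (Lop s φ A (Bcoef g₀ φ A D) f) t x =
      s * (((deriv φ t : ℝ) : ℂ) * pt (fun p : ℝ × ℝ => f p.1 p.2) (t, x)
        + ((φ t : ℝ) : ℂ) * pt (pt (fun p : ℝ × ℝ => f p.1 p.2)) (t, x)
        + ((1/2 : ℂ) * ((deriv (deriv φ) t : ℝ) : ℂ) * (x : ℂ) + ((deriv A t : ℝ) : ℂ))
            * px (fun p : ℝ × ℝ => f p.1 p.2) (t, x)
        + ((1/2 : ℂ) * ((deriv φ t : ℝ) : ℂ) * (x : ℂ) + ((A t : ℝ) : ℂ))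
            * pt (px (fun p : ℝ × ℝ => f p.1 p.2)) (t, x)
        + (-(I/4) * ((deriv (deriv (deriv φ)) t : ℝ) : ℂ) * (x : ℂ)^2
            - I * ((deriv (deriv A) t : ℝ) : ℂ) * (x : ℂ)
            + (1/4 : ℂ) * ((deriv (deriv φ) t : ℝ) : ℂ)
            + I * (((deriv g₀ t : ℝ) : ℂ) * ((φ t : ℝ) : ℂ) + ((g₀ t : ℝ) : ℂ) * ((deriv φ t : ℝ) : ℂ))
            + I * ((deriv D t : ℝ) : ℂ)) * f t x
        + Bcoef g₀ φ A D t x * pt (fun p : ℝ × ℝ => f p.1 p.2) (t, x)) := by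
  set F : ℝ × ℝ → ℂ := fun p : ℝ × ℝ => f p.1 p.2 with hFdef
  have heq : (fun t' => Lop s φ A (Bcoef g₀ φ A D) f t' x)
      = fun t' => s * (((φ t' : ℝ) : ℂ) * pt F (t', x)
        + ((1/2 : ℂ) * ((deriv φ t' : ℝ) : ℂ) * (x : ℂ) + ((A t' : ℝ) : ℂ)) * px F (t', x)
        + Bcoef g₀ φ A D t' x * f t' x) := by
    funext t'
    rw [Lop, show pderivT f t' x = pt F (t', x) from (hasDerivAt_T hF t' x).deriv,
      show pderivX f t' x = px F (t', x) from (hasDerivAt_X hF t' x).deriv]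
  have hca := hR hφ t
  have hcb := hR (smooth_deriv hφ) t
  have hcc := hR (smooth_deriv (smooth_deriv hφ)) t
  have hcA := hR hA t
  have hcA2 := hR (smooth_deriv hA) t
  have hcg := hR hg₀ t
  have hcD := hR hD t
  have hft : HasDerivAt (fun t' => pt F (t', x)) (pt (pt F) (t, x)) t :=
    hasDerivAt_T (smooth_pt hF) t x
  have hfx : HasDerivAt (fun t' => px F (t', x)) (pt (px F) (t, x)) t :=
    hasDerivAt_T (smooth_px hF) t x
  have hfv : HasDerivAt (fun t' => f t' x) (pt F (t, x)) t := hasDerivAt_T hF t x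
  have hB : HasDerivAt (fun t' => Bcoef g₀ φ A D t' x)
      (-(I/4) * ((deriv (deriv (deriv φ)) t : ℝ) : ℂ) * (x : ℂ)^2
        - I * ((deriv (deriv A) t : ℝ) : ℂ) * (x : ℂ)
        + (1/4 : ℂ) * ((deriv (deriv φ) t : ℝ) : ℂ)
        + (I * ((deriv g₀ t : ℝ) : ℂ) * ((φ t : ℝ) : ℂ) + I * ((g₀ t : ℝ) : ℂ) * ((deriv φ t : ℝ) : ℂ))
        + I * ((deriv D t : ℝ) : ℂ)) t := by
    simp only [Bcoef]
    exact ((((((hcc.const_mul (-(I/4))).mul_const ((x:ℂ)^2)).sub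
      ((hcA2.const_mul I).mul_const (x:ℂ))).add (hcb.const_mul (1/4 : ℂ))).add
      ((hcg.const_mul I).mul hca)).add (hcD.const_mul I))
  have key : HasDerivAt (fun t' => s * (((φ t' : ℝ) : ℂ) * pt F (t', x)
        + ((1/2 : ℂ) * ((deriv φ t' : ℝ) : ℂ) * (x : ℂ) + ((A t' : ℝ) : ℂ)) * px F (t', x)
        + Bcoef g₀ φ A D t' x * f t' x))
      (s * ((((deriv φ t : ℝ) : ℂ) * pt F (t, x) + ((φ t : ℝ) : ℂ) * pt (pt F) (t, x))
        + ((((1/2 : ℂ) * ((deriv (deriv φ) t : ℝ) : ℂ)) * (x : ℂ) + ((deriv A t : ℝ) : ℂ)) * px F (t, x)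
            + ((1/2 : ℂ) * ((deriv φ t : ℝ) : ℂ) * (x : ℂ) + ((A t : ℝ) : ℂ)) * pt (px F) (t, x))
        + ((-(I/4) * ((deriv (deriv (deriv φ)) t : ℝ) : ℂ) * (x : ℂ)^2
            - I * ((deriv (deriv A) t : ℝ) : ℂ) * (x : ℂ)
            + (1/4 : ℂ) * ((deriv (deriv φ) t : ℝ) : ℂ)
            + (I * ((deriv g₀ t : ℝ) : ℂ) * ((φ t : ℝ) : ℂ) + I * ((g₀ t : ℝ) : ℂ) * ((deriv φ t : ℝ) : ℂ))
            + I * ((deriv D t : ℝ) : ℂ)) * f t x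
          + Bcoef g₀ φ A D t x * pt F (t, x)))) t := by
    exact (((hca.mul hft).add
      ((((hcb.const_mul (1/2 : ℂ)).mul_const (x:ℂ)).add hcA).mul hfx)).add
      (hB.mul hfv)).const_mul s
  rw [pderivT, heq, key.deriv]
  ring

lemma LopX {φ A g₀ D : ℝ → ℝ} {f : ℝ → ℝ → ℂ}
    (hφ : ContDiff ℝ ∞ φ) (hF : ContDiff ℝ ∞ (fun p : ℝ × ℝ => f p.1 p.2))
    (s : ℂ) (t x : ℝ) :
    pderivX (Lop s φ A (Bcoef g₀ φ A D) f) t x =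
      s * (((φ t : ℝ) : ℂ) * px (pt (fun p : ℝ × ℝ => f p.1 p.2)) (t, x)
        + (1/2 : ℂ) * ((deriv φ t : ℝ) : ℂ) * px (fun p : ℝ × ℝ => f p.1 p.2) (t, x)
        + ((1/2 : ℂ) * ((deriv φ t : ℝ) : ℂ) * (x : ℂ) + ((A t : ℝ) : ℂ))
            * px (px (fun p : ℝ × ℝ => f p.1 p.2)) (t, x)
        + (-(I/2) * ((deriv (deriv φ) t : ℝ) : ℂ) * (x : ℂ) - I * ((deriv A t : ℝ) : ℂ)) * f t x
        + Bcoef g₀ φ A D t x * px (fun p : ℝ × ℝ => f p.1 p.2) (t, x)) := by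
  set F : ℝ × ℝ → ℂ := fun p : ℝ × ℝ => f p.1 p.2 with hFdef
  have heq : (fun x' => Lop s φ A (Bcoef g₀ φ A D) f t x')
      = fun x' => s * (((φ t : ℝ) : ℂ) * pt F (t, x')
        + ((1/2 : ℂ) * ((deriv φ t : ℝ) : ℂ) * (x' : ℂ) + ((A t : ℝ) : ℂ)) * px F (t, x')
        + Bcoef g₀ φ A D t x' * f t x') := by
    funext x'
    rw [Lop, show pderivT f t x' = pt F (t, x') from (hasDerivAt_T hF t x').deriv,
      show pderivX f t x' = px F (t, x') from (hasDerivAt_X hF t x').deriv]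
  have hx : HasDerivAt (fun x' : ℝ => ((x' : ℝ) : ℂ)) ((1 : ℝ) : ℂ) x :=
    (hasDerivAt_id x).ofReal_comp
  have hft : HasDerivAt (fun x' => pt F (t, x')) (px (pt F) (t, x)) x :=
    hasDerivAt_X (smooth_pt hF) t x
  have hfx : HasDerivAt (fun x' => px F (t, x')) (px (px F) (t, x)) x :=
    hasDerivAt_X (smooth_px hF) t x
  have hfv : HasDerivAt (fun x' => f t x') (px F (t, x)) x := hasDerivAt_X hF t x
  have hsq : HasDerivAt (fun x' : ℝ => ((x' : ℂ))^2) (2*(x:ℂ)) x := by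
    have h3 : (fun x' : ℝ => ((x' : ℂ))^2) = fun x' : ℝ => (x' : ℂ) * (x' : ℂ) := by
      funext y; ring
    rw [h3]; refine (hx.mul hx).congr_deriv ?_; push_cast; ring
  have hB : HasDerivAt (fun x' => Bcoef g₀ φ A D t x')
      (-(I/2) * ((deriv (deriv φ) t : ℝ) : ℂ) * (x : ℂ) - I * ((deriv A t : ℝ) : ℂ)) x := by
    simp only [Bcoef]
    have h1 := ((((hsq.const_mul (-(I/4) * ((deriv (deriv φ) t : ℝ) : ℂ))).sub
      (hx.const_mul (I * ((deriv A t : ℝ) : ℂ)))).add_const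
      ((1/4 : ℂ) * ((deriv φ t : ℝ) : ℂ))).add_const
      (I * ((g₀ t : ℝ) : ℂ) * ((φ t : ℝ) : ℂ))).add_const (I * ((D t : ℝ) : ℂ))
    refine h1.congr_deriv ?_
    push_cast; ring
  have key := (((hft.const_mul ((φ t : ℝ) : ℂ)).add
      (((hx.const_mul ((1/2 : ℂ) * ((deriv φ t : ℝ) : ℂ))).add_const ((A t : ℝ) : ℂ)).mul hfx)).add
      (hB.mul hfv)).const_mul s
  rw [pderivX, heq]
  erw [key.deriv]
  push_cast
  ring

lemma LopV {φ A g₀ D : ℝ → ℝ} {f : ℝ → ℝ → ℂ}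
    (hF : ContDiff ℝ ∞ (fun p : ℝ × ℝ => f p.1 p.2)) (s : ℂ) (t x : ℝ) :
    Lop s φ A (Bcoef g₀ φ A D) f t x =
      s * (((φ t : ℝ) : ℂ) * pt (fun p : ℝ × ℝ => f p.1 p.2) (t, x)
        + ((1/2 : ℂ) * ((deriv φ t : ℝ) : ℂ) * (x : ℂ) + ((A t : ℝ) : ℂ))
            * px (fun p : ℝ × ℝ => f p.1 p.2) (t, x)
        + Bcoef g₀ φ A D t x * f t x) := by
  rw [Lop, show pderivT f t x = pt (fun p : ℝ × ℝ => f p.1 p.2) (t, x) from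
      (hasDerivAt_T hF t x).deriv,
    show pderivX f t x = px (fun p : ℝ × ℝ => f p.1 p.2) (t, x) from
      (hasDerivAt_X hF t x).deriv]

lemma smooth_Cint {χ g₁ : ℝ → ℝ} (hχ : ContDiff ℝ ∞ χ) (hg : ContDiff ℝ ∞ g₁) :
    ContDiff ℝ ∞ (Cint χ g₁) := by
  have hc : Continuous fun u => χ u * g₁ u := hχ.continuous.mul hg.continuous
  have hd : ∀ t, HasDerivAt (Cint χ g₁) (χ t * g₁ t) t := fun t =>
    (hc.integral_hasStrictDerivAt 0 t).hasDerivAt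
  rw [contDiff_infty_iff_deriv]
  refine ⟨fun t => (hd t).differentiableAt, ?_⟩
  have : deriv (Cint χ g₁) = fun t => χ t * g₁ t := funext fun t => (hd t).deriv
  rw [this]
  exact hχ.mul hg

lemma deriv_Cint {χ g₁ : ℝ → ℝ} (hχ : ContDiff ℝ ∞ χ) (hg : ContDiff ℝ ∞ g₁) :
    deriv (Cint χ g₁) = fun t => χ t * g₁ t :=
  funext fun t => (((hχ.continuous.mul hg.continuous).integral_hasStrictDerivAt 0 t).hasDerivAt).deriv

section CoeffDerivs

variable {χ ψ g₁ g₂ : ℝ → ℝ}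

lemma hD1 (hχ : ContDiff ℝ ∞ χ) (t : ℝ) : HasDerivAt χ (deriv χ t) t :=
  (hχ.differentiable (by simp) t).hasDerivAt

lemma hD2 (hχ : ContDiff ℝ ∞ χ) (t : ℝ) : HasDerivAt (deriv χ) (deriv (deriv χ) t) t :=
  ((smooth_deriv hχ).differentiable (by simp) t).hasDerivAt

lemma hDC (hχ : ContDiff ℝ ∞ χ) (hg : ContDiff ℝ ∞ g₁) (t : ℝ) :
    HasDerivAt (Cint χ g₁) (χ t * g₁ t) t :=
  ((hχ.continuous.mul hg.continuous).integral_hasStrictDerivAt 0 t).hasDerivAt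

lemma d_sq (hχ : ContDiff ℝ ∞ χ) :
    deriv (fun t => χ t ^ 2) = fun t => 2 * χ t * deriv χ t := by
  funext t
  show deriv (fun t => χ t ^ 2) t = 2 * χ t * deriv χ t
  erw [((hD1 hχ t).pow 2).deriv]; push_cast; ring

lemma d_sq' (hχ : ContDiff ℝ ∞ χ) (hode : ∀ t, deriv (deriv χ) t + 2 * g₂ t * χ t = 0) :
    deriv (fun t => 2 * χ t * deriv χ t)
      = fun t => 2 * deriv χ t ^ 2 - 4 * g₂ t * χ t ^ 2 := by
  funext t
  show deriv (fun t => 2 * χ t * deriv χ t) t = 2 * deriv χ t ^ 2 - 4 * g₂ t * χ t ^ 2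
  erw [(((hD1 hχ t).const_mul 2).mul (hD2 hχ t)).deriv]
  have h2 : deriv (deriv χ) t = -(2 * g₂ t * χ t) := by linarith [hode t]
  rw [h2]; ring

lemma d_sq'' (hχ : ContDiff ℝ ∞ χ) (hg₂ : ContDiff ℝ ∞ g₂)
    (hode : ∀ t, deriv (deriv χ) t + 2 * g₂ t * χ t = 0) :
    deriv (fun t => 2 * deriv χ t ^ 2 - 4 * g₂ t * χ t ^ 2)
      = fun t => -16 * g₂ t * χ t * deriv χ t - 4 * deriv g₂ t * χ t ^ 2 := by
  funext t
  show deriv (fun t => 2 * deriv χ t ^ 2 - 4 * g₂ t * χ t ^ 2) t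
      = -16 * g₂ t * χ t * deriv χ t - 4 * deriv g₂ t * χ t ^ 2
  erw [((((hD2 hχ t).pow 2).const_mul 2).sub
    ((((hD1 hg₂ t).const_mul 4).mul ((hD1 hχ t).pow 2)))).deriv]
  have h2 : deriv (deriv χ) t = -(2 * g₂ t * χ t) := by linarith [hode t]
  rw [h2]; push_cast; simp only [Pi.mul_apply, Pi.pow_apply]; ring

lemma d_A (hχ : ContDiff ℝ ∞ χ) (hg : ContDiff ℝ ∞ g₁) :
    deriv (fun t => -(χ t * Cint χ g₁ t))
      = fun t => -(deriv χ t * Cint χ g₁ t) - χ t ^ 2 * g₁ t := by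
  funext t
  show deriv (fun t => -(χ t * Cint χ g₁ t)) t
      = -(deriv χ t * Cint χ g₁ t) - χ t ^ 2 * g₁ t
  erw [(((hD1 hχ t).mul (hDC hχ hg t)).neg).deriv]; ring

lemma d_A' (hχ : ContDiff ℝ ∞ χ) (hg : ContDiff ℝ ∞ g₁) (hg₂ : ContDiff ℝ ∞ g₂)
    (hode : ∀ t, deriv (deriv χ) t + 2 * g₂ t * χ t = 0) :
    deriv (fun t => -(deriv χ t * Cint χ g₁ t) - χ t ^ 2 * g₁ t)
      = fun t => 2 * g₂ t * χ t * Cint χ g₁ t - 3 * χ t * deriv χ t * g₁ t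
          - χ t ^ 2 * deriv g₁ t := by
  funext t
  show deriv (fun t => -(deriv χ t * Cint χ g₁ t) - χ t ^ 2 * g₁ t) t
      = 2 * g₂ t * χ t * Cint χ g₁ t - 3 * χ t * deriv χ t * g₁ t - χ t ^ 2 * deriv g₁ t
  erw [((((hD2 hχ t).mul (hDC hχ hg t)).neg).sub
    (((hD1 hχ t).pow 2).mul (hD1 hg t))).deriv]
  have h2 : deriv (deriv χ) t = -(2 * g₂ t * χ t) := by linarith [hode t]
  rw [h2]; push_cast; simp only [Pi.mul_apply, Pi.pow_apply]; ring

lemma d_D (hχ : ContDiff ℝ ∞ χ) (hg : ContDiff ℝ ∞ g₁) :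
    deriv (fun t => -(Cint χ g₁ t ^ 2) / 2)
      = fun t => -(Cint χ g₁ t * (χ t * g₁ t)) := by
  funext t
  show deriv (fun t => -(Cint χ g₁ t ^ 2) / 2) t = -(Cint χ g₁ t * (χ t * g₁ t))
  erw [((((hDC hχ hg t).pow 2).neg).div_const 2).deriv]; push_cast; ring

lemma d_mul (hχ : ContDiff ℝ ∞ χ) (hψ : ContDiff ℝ ∞ ψ) :
    deriv (fun t => 2 * χ t * ψ t)
      = fun t => 2 * (deriv χ t * ψ t + χ t * deriv ψ t) := by
  funext t
  show deriv (fun t => 2 * χ t * ψ t) t = 2 * (deriv χ t * ψ t + χ t * deriv ψ t)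
  erw [(((hD1 hχ t).const_mul 2).mul (hD1 hψ t)).deriv]; ring

lemma d_mul' (hχ : ContDiff ℝ ∞ χ) (hψ : ContDiff ℝ ∞ ψ)
    (hode : ∀ t, deriv (deriv χ) t + 2 * g₂ t * χ t = 0)
    (hode' : ∀ t, deriv (deriv ψ) t + 2 * g₂ t * ψ t = 0) :
    deriv (fun t => 2 * (deriv χ t * ψ t + χ t * deriv ψ t))
      = fun t => 4 * deriv χ t * deriv ψ t - 8 * g₂ t * χ t * ψ t := by
  funext t
  show deriv (fun t => 2 * (deriv χ t * ψ t + χ t * deriv ψ t)) t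
      = 4 * deriv χ t * deriv ψ t - 8 * g₂ t * χ t * ψ t
  erw [((((hD2 hχ t).mul (hD1 hψ t)).add ((hD1 hχ t).mul (hD2 hψ t))).const_mul 2).deriv]
  have h2 : deriv (deriv χ) t = -(2 * g₂ t * χ t) := by linarith [hode t]
  have h3 : deriv (deriv ψ) t = -(2 * g₂ t * ψ t) := by linarith [hode' t]
  rw [h2, h3]; ring

lemma d_mul'' (hχ : ContDiff ℝ ∞ χ) (hψ : ContDiff ℝ ∞ ψ) (hg₂ : ContDiff ℝ ∞ g₂)
    (hode : ∀ t, deriv (deriv χ) t + 2 * g₂ t * χ t = 0)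
    (hode' : ∀ t, deriv (deriv ψ) t + 2 * g₂ t * ψ t = 0) :
    deriv (fun t => 4 * deriv χ t * deriv ψ t - 8 * g₂ t * χ t * ψ t)
      = fun t => -16 * g₂ t * (χ t * deriv ψ t + deriv χ t * ψ t)
          - 8 * deriv g₂ t * χ t * ψ t := by
  funext t
  show deriv (fun t => 4 * deriv χ t * deriv ψ t - 8 * g₂ t * χ t * ψ t) t
      = -16 * g₂ t * (χ t * deriv ψ t + deriv χ t * ψ t) - 8 * deriv g₂ t * χ t * ψ t
  erw [((((hD2 hχ t).const_mul 4).mul (hD2 hψ t)).sub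
    ((((hD1 hg₂ t).const_mul 8).mul (hD1 hχ t)).mul (hD1 hψ t))).deriv]
  have h2 : deriv (deriv χ) t = -(2 * g₂ t * χ t) := by linarith [hode t]
  have h3 : deriv (deriv ψ) t = -(2 * g₂ t * ψ t) := by linarith [hode' t]
  rw [h2, h3]; simp only [Pi.mul_apply, Pi.pow_apply]; ring

lemma d_Am (hχ : ContDiff ℝ ∞ χ) (hψ : ContDiff ℝ ∞ ψ) (hg : ContDiff ℝ ∞ g₁) :
    deriv (fun t => -(χ t * Cint ψ g₁ t + ψ t * Cint χ g₁ t))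
      = fun t => -(deriv χ t * Cint ψ g₁ t + deriv ψ t * Cint χ g₁ t)
          - 2 * χ t * ψ t * g₁ t := by
  funext t
  show deriv (fun t => -(χ t * Cint ψ g₁ t + ψ t * Cint χ g₁ t)) t
      = -(deriv χ t * Cint ψ g₁ t + deriv ψ t * Cint χ g₁ t) - 2 * χ t * ψ t * g₁ t
  erw [((((hD1 hχ t).mul (hDC hψ hg t)).add ((hD1 hψ t).mul (hDC hχ hg t))).neg).deriv]
  ring

lemma d_Am' (hχ : ContDiff ℝ ∞ χ) (hψ : ContDiff ℝ ∞ ψ) (hg : ContDiff ℝ ∞ g₁)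
    (hg₂ : ContDiff ℝ ∞ g₂)
    (hode : ∀ t, deriv (deriv χ) t + 2 * g₂ t * χ t = 0)
    (hode' : ∀ t, deriv (deriv ψ) t + 2 * g₂ t * ψ t = 0) :
    deriv (fun t => -(deriv χ t * Cint ψ g₁ t + deriv ψ t * Cint χ g₁ t)
        - 2 * χ t * ψ t * g₁ t)
      = fun t => 2 * g₂ t * (χ t * Cint ψ g₁ t + ψ t * Cint χ g₁ t)
          - 3 * g₁ t * (deriv χ t * ψ t + χ t * deriv ψ t) - 2 * χ t * ψ t * deriv g₁ t := by
  funext t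
  show deriv (fun t => -(deriv χ t * Cint ψ g₁ t + deriv ψ t * Cint χ g₁ t)
        - 2 * χ t * ψ t * g₁ t) t
      = 2 * g₂ t * (χ t * Cint ψ g₁ t + ψ t * Cint χ g₁ t)
          - 3 * g₁ t * (deriv χ t * ψ t + χ t * deriv ψ t) - 2 * χ t * ψ t * deriv g₁ t
  erw [(((((hD2 hχ t).mul (hDC hψ hg t)).add ((hD2 hψ t).mul (hDC hχ hg t))).neg).sub
    ((((hD1 hχ t).const_mul 2).mul (hD1 hψ t)).mul (hD1 hg t))).deriv]
  have h2 : deriv (deriv χ) t = -(2 * g₂ t * χ t) := by linarith [hode t]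
  have h3 : deriv (deriv ψ) t = -(2 * g₂ t * ψ t) := by linarith [hode' t]
  rw [h2, h3]; simp only [Pi.mul_apply, Pi.pow_apply]; ring

lemma d_Dm (hχ : ContDiff ℝ ∞ χ) (hψ : ContDiff ℝ ∞ ψ) (hg : ContDiff ℝ ∞ g₁) :
    deriv (fun t => -(Cint χ g₁ t * Cint ψ g₁ t))
      = fun t => -(χ t * g₁ t * Cint ψ g₁ t + Cint χ g₁ t * (ψ t * g₁ t)) := by
  funext t
  show deriv (fun t => -(Cint χ g₁ t * Cint ψ g₁ t)) t
      = -(χ t * g₁ t * Cint ψ g₁ t + Cint χ g₁ t * (ψ t * g₁ t))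
  erw [(((hDC hχ hg t).mul (hDC hψ hg t)).neg).deriv]

end CoeffDerivs

end SL2Aux


/-- The symmetry operators `L₁, L₂, L₃` of the Schrödinger equation with potential
`V(t,x) = g₂(t)x² + g₁(t)x + g₀(t)` satisfy the `sl₂` bracket relations
`[L₃,L₁] = -2L₁`, `[L₃,L₂] = 2L₂`, `[L₂,L₁] = L₃`. -/
theorem sl2_bracket_relations
    (g₀ g₁ g₂ χ₁ χ₂ : ℝ → ℝ)
    (hg₀ : ContDiff ℝ (⊤ : ℕ∞) g₀) (hg₁ : ContDiff ℝ (⊤ : ℕ∞) g₁) (hg₂ : ContDiff ℝ (⊤ : ℕ∞) g₂)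
    (hχ₁ : ContDiff ℝ (⊤ : ℕ∞) χ₁) (hχ₂ : ContDiff ℝ (⊤ : ℕ∞) χ₂)
    (hode₁ : ∀ t, deriv (deriv χ₁) t + 2 * g₂ t * χ₁ t = 0)
    (hode₂ : ∀ t, deriv (deriv χ₂) t + 2 * g₂ t * χ₂ t = 0)
    (hW : ∀ t, χ₁ t * deriv χ₂ t - deriv χ₁ t * χ₂ t = 1)
    (f : ℝ → ℝ → ℂ) (hf : ContDiff ℝ (⊤ : ℕ∞) (fun p : ℝ × ℝ => f p.1 p.2)) :
    (∀ t x, Lthree g₀ g₁ χ₁ χ₂ (Lone g₀ g₁ χ₁ f) t x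
        - Lone g₀ g₁ χ₁ (Lthree g₀ g₁ χ₁ χ₂ f) t x = -2 * Lone g₀ g₁ χ₁ f t x) ∧
    (∀ t x, Lthree g₀ g₁ χ₁ χ₂ (Ltwo g₀ g₁ χ₂ f) t x
        - Ltwo g₀ g₁ χ₂ (Lthree g₀ g₁ χ₁ χ₂ f) t x = 2 * Ltwo g₀ g₁ χ₂ f t x) ∧
    (∀ t x, Ltwo g₀ g₁ χ₂ (Lone g₀ g₁ χ₁ f) t x
        - Lone g₀ g₁ χ₁ (Ltwo g₀ g₁ χ₂ f) t x = Lthree g₀ g₁ χ₁ χ₂ f t x) := by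
  have hg₀' : ContDiff ℝ ∞ g₀ := hg₀.of_le (by simp)
  have hg₁' : ContDiff ℝ ∞ g₁ := hg₁.of_le (by simp)
  have hg₂' : ContDiff ℝ ∞ g₂ := hg₂.of_le (by simp)
  have hχ₁' : ContDiff ℝ ∞ χ₁ := hχ₁.of_le (by simp)
  have hχ₂' : ContDiff ℝ ∞ χ₂ := hχ₂.of_le (by simp)
  have hF : ContDiff ℝ ∞ (fun p : ℝ × ℝ => f p.1 p.2) := hf.of_le (by simp)
  have hC1 : ContDiff ℝ ∞ (Cint χ₁ g₁) := smooth_Cint hχ₁' hg₁'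
  have hC2 : ContDiff ℝ ∞ (Cint χ₂ g₁) := smooth_Cint hχ₂' hg₁'
  have hφ1 : ContDiff ℝ ∞ (fun t => χ₁ t ^ 2) := hχ₁'.pow 2
  have hφ2 : ContDiff ℝ ∞ (fun t => χ₂ t ^ 2) := hχ₂'.pow 2
  have hφ3 : ContDiff ℝ ∞ (fun t => 2 * χ₁ t * χ₂ t) := (contDiff_const.mul hχ₁').mul hχ₂'
  have hA1 : ContDiff ℝ ∞ (fun t => -(χ₁ t * Cint χ₁ g₁ t)) := (hχ₁'.mul hC1).neg
  have hA2 : ContDiff ℝ ∞ (fun t => -(χ₂ t * Cint χ₂ g₁ t)) := (hχ₂'.mul hC2).neg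
  have hA3 : ContDiff ℝ ∞ (fun t => -(χ₁ t * Cint χ₂ g₁ t + χ₂ t * Cint χ₁ g₁ t)) :=
    ((hχ₁'.mul hC2).add (hχ₂'.mul hC1)).neg
  have hDD1 : ContDiff ℝ ∞ (fun t => -(Cint χ₁ g₁ t ^ 2) / 2) :=
    ((hC1.pow 2).neg).div_const 2
  have hDD2 : ContDiff ℝ ∞ (fun t => -(Cint χ₂ g₁ t ^ 2) / 2) :=
    ((hC2.pow 2).neg).div_const 2
  have hDD3 : ContDiff ℝ ∞ (fun t => -(Cint χ₁ g₁ t * Cint χ₂ g₁ t)) := (hC1.mul hC2).neg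
  refine ⟨fun t x => ?_, fun t x => ?_, fun t x => ?_⟩
  · have hT1 := LopT hφ1 hA1 hg₀' hDD1 hF 1 t x
    have hX1 := LopX (A := fun t => -(χ₁ t * Cint χ₁ g₁ t))
      (D := fun t => -(Cint χ₁ g₁ t ^ 2) / 2) (g₀ := g₀) hφ1 hF 1 t x
    have hT3 := LopT hφ3 hA3 hg₀' hDD3 hF 1 t x
    have hX3 := LopX (A := fun t => -(χ₁ t * Cint χ₂ g₁ t + χ₂ t * Cint χ₁ g₁ t))
      (D := fun t => -(Cint χ₁ g₁ t * Cint χ₂ g₁ t)) (g₀ := g₀) hφ3 hF 1 t x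
    have hsym := symm_ptpx hF (t, x)
    have hWc : ((χ₁ t : ℝ) : ℂ) * ((deriv χ₂ t : ℝ) : ℂ)
        - ((deriv χ₁ t : ℝ) : ℂ) * ((χ₂ t : ℝ) : ℂ) = 1 := by exact_mod_cast hW t
    simp only [Lthree, Lone, Lop]
    rw [hT1, hX1, hT3, hX3, hsym,
      show pderivT f t x = pt (fun p : ℝ × ℝ => f p.1 p.2) (t, x) from
        (hasDerivAt_T hF t x).deriv,
      show pderivX f t x = px (fun p : ℝ × ℝ => f p.1 p.2) (t, x) from
        (hasDerivAt_X hF t x).deriv]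
    simp only [Bcoef, d_sq hχ₁', d_sq' hχ₁' hode₁, d_sq'' hχ₁' hg₂' hode₁,
      d_A hχ₁' hg₁', d_A' hχ₁' hg₁' hg₂' hode₁, d_D hχ₁' hg₁',
      d_mul hχ₁' hχ₂', d_mul' hχ₁' hχ₂' hode₁ hode₂, d_mul'' hχ₁' hχ₂' hg₂' hode₁ hode₂,
      d_Am hχ₁' hχ₂' hg₁', d_Am' hχ₁' hχ₂' hg₁' hg₂' hode₁ hode₂, d_Dm hχ₁' hχ₂' hg₁']
    push_cast
    linear_combination (((1:ℂ)) * ((Cint χ₁ g₁ t:ℝ) : ℂ) * ((Cint χ₁ g₁ t:ℝ) : ℂ) * I * f t x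
      + ((-2:ℂ)) * ((deriv χ₁ t:ℝ) : ℂ) * ((Cint χ₁ g₁ t:ℝ) : ℂ) * ((x:ℝ) : ℂ) * I * f t x
      + ((1:ℂ)) * ((deriv χ₁ t:ℝ) : ℂ) * ((deriv χ₁ t:ℝ) : ℂ) * ((x:ℝ) : ℂ) * ((x:ℝ) : ℂ) * I * f t x
      + ((2:ℂ)) * ((χ₁ t:ℝ) : ℂ) * ((Cint χ₁ g₁ t:ℝ) : ℂ) * px (fun p : ℝ × ℝ => f p.1 p.2) (t, x)
      + ((-1:ℂ)) * ((χ₁ t:ℝ) : ℂ) * ((deriv χ₁ t:ℝ) : ℂ) * f t x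
      + ((-2:ℂ)) * ((χ₁ t:ℝ) : ℂ) * ((deriv χ₁ t:ℝ) : ℂ) * ((x:ℝ) : ℂ) * px (fun p : ℝ × ℝ => f p.1 p.2) (t, x)
      + ((-2:ℂ)) * ((χ₁ t:ℝ) : ℂ) * ((χ₁ t:ℝ) : ℂ) * pt (fun p : ℝ × ℝ => f p.1 p.2) (t, x)
      + ((-2:ℂ)) * ((χ₁ t:ℝ) : ℂ) * ((χ₁ t:ℝ) : ℂ) * ((g₂ t:ℝ) : ℂ) * ((x:ℝ) : ℂ) * ((x:ℝ) : ℂ) * I * f t x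
      + ((-2:ℂ)) * ((χ₁ t:ℝ) : ℂ) * ((χ₁ t:ℝ) : ℂ) * ((g₁ t:ℝ) : ℂ) * ((x:ℝ) : ℂ) * I * f t x
      + ((-2:ℂ)) * ((χ₁ t:ℝ) : ℂ) * ((χ₁ t:ℝ) : ℂ) * ((g₀ t:ℝ) : ℂ) * I * f t x) * hWc
  · have hT2 := LopT hφ2 hA2 hg₀' hDD2 hF (-1) t x
    have hX2 := LopX (A := fun t => -(χ₂ t * Cint χ₂ g₁ t))
      (D := fun t => -(Cint χ₂ g₁ t ^ 2) / 2) (g₀ := g₀) hφ2 hF (-1) t x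
    have hT3 := LopT hφ3 hA3 hg₀' hDD3 hF 1 t x
    have hX3 := LopX (A := fun t => -(χ₁ t * Cint χ₂ g₁ t + χ₂ t * Cint χ₁ g₁ t))
      (D := fun t => -(Cint χ₁ g₁ t * Cint χ₂ g₁ t)) (g₀ := g₀) hφ3 hF 1 t x
    have hsym := symm_ptpx hF (t, x)
    have hWc : ((χ₁ t : ℝ) : ℂ) * ((deriv χ₂ t : ℝ) : ℂ)
        - ((deriv χ₁ t : ℝ) : ℂ) * ((χ₂ t : ℝ) : ℂ) = 1 := by exact_mod_cast hW t
    simp only [Lthree, Ltwo, Lop]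
    rw [hT2, hX2, hT3, hX3, hsym,
      show pderivT f t x = pt (fun p : ℝ × ℝ => f p.1 p.2) (t, x) from
        (hasDerivAt_T hF t x).deriv,
      show pderivX f t x = px (fun p : ℝ × ℝ => f p.1 p.2) (t, x) from
        (hasDerivAt_X hF t x).deriv]
    simp only [Bcoef, d_sq hχ₂', d_sq' hχ₂' hode₂, d_sq'' hχ₂' hg₂' hode₂,
      d_A hχ₂' hg₁', d_A' hχ₂' hg₁' hg₂' hode₂, d_D hχ₂' hg₁',
      d_mul hχ₁' hχ₂', d_mul' hχ₁' hχ₂' hode₁ hode₂, d_mul'' hχ₁' hχ₂' hg₂' hode₁ hode₂,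
      d_Am hχ₁' hχ₂' hg₁', d_Am' hχ₁' hχ₂' hg₁' hg₂' hode₁ hode₂, d_Dm hχ₁' hχ₂' hg₁']
    push_cast
    linear_combination (((1:ℂ)) * ((Cint χ₂ g₁ t:ℝ) : ℂ) * ((Cint χ₂ g₁ t:ℝ) : ℂ) * I * f t x
      + ((-2:ℂ)) * ((deriv χ₂ t:ℝ) : ℂ) * ((Cint χ₂ g₁ t:ℝ) : ℂ) * ((x:ℝ) : ℂ) * I * f t x
      + ((1:ℂ)) * ((deriv χ₂ t:ℝ) : ℂ) * ((deriv χ₂ t:ℝ) : ℂ) * ((x:ℝ) : ℂ) * ((x:ℝ) : ℂ) * I * f t x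
      + ((2:ℂ)) * ((χ₂ t:ℝ) : ℂ) * ((Cint χ₂ g₁ t:ℝ) : ℂ) * px (fun p : ℝ × ℝ => f p.1 p.2) (t, x)
      + ((-1:ℂ)) * ((χ₂ t:ℝ) : ℂ) * ((deriv χ₂ t:ℝ) : ℂ) * f t x
      + ((-2:ℂ)) * ((χ₂ t:ℝ) : ℂ) * ((deriv χ₂ t:ℝ) : ℂ) * ((x:ℝ) : ℂ) * px (fun p : ℝ × ℝ => f p.1 p.2) (t, x)
      + ((-2:ℂ)) * ((χ₂ t:ℝ) : ℂ) * ((χ₂ t:ℝ) : ℂ) * pt (fun p : ℝ × ℝ => f p.1 p.2) (t, x)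
      + ((-2:ℂ)) * ((χ₂ t:ℝ) : ℂ) * ((χ₂ t:ℝ) : ℂ) * ((g₂ t:ℝ) : ℂ) * ((x:ℝ) : ℂ) * ((x:ℝ) : ℂ) * I * f t x
      + ((-2:ℂ)) * ((χ₂ t:ℝ) : ℂ) * ((χ₂ t:ℝ) : ℂ) * ((g₁ t:ℝ) : ℂ) * ((x:ℝ) : ℂ) * I * f t x
      + ((-2:ℂ)) * ((χ₂ t:ℝ) : ℂ) * ((χ₂ t:ℝ) : ℂ) * ((g₀ t:ℝ) : ℂ) * I * f t x) * hWc
  · have hT1 := LopT hφ1 hA1 hg₀' hDD1 hF 1 t x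
    have hX1 := LopX (A := fun t => -(χ₁ t * Cint χ₁ g₁ t))
      (D := fun t => -(Cint χ₁ g₁ t ^ 2) / 2) (g₀ := g₀) hφ1 hF 1 t x
    have hT2 := LopT hφ2 hA2 hg₀' hDD2 hF (-1) t x
    have hX2 := LopX (A := fun t => -(χ₂ t * Cint χ₂ g₁ t))
      (D := fun t => -(Cint χ₂ g₁ t ^ 2) / 2) (g₀ := g₀) hφ2 hF (-1) t x
    have hsym := symm_ptpx hF (t, x)
    have hWc : ((χ₁ t : ℝ) : ℂ) * ((deriv χ₂ t : ℝ) : ℂ)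
        - ((deriv χ₁ t : ℝ) : ℂ) * ((χ₂ t : ℝ) : ℂ) = 1 := by exact_mod_cast hW t
    simp only [Lthree, Ltwo, Lone, Lop]
    rw [hT1, hX1, hT2, hX2, hsym,
      show pderivT f t x = pt (fun p : ℝ × ℝ => f p.1 p.2) (t, x) from
        (hasDerivAt_T hF t x).deriv,
      show pderivX f t x = px (fun p : ℝ × ℝ => f p.1 p.2) (t, x) from
        (hasDerivAt_X hF t x).deriv]
    simp only [Bcoef, d_sq hχ₁', d_sq' hχ₁' hode₁, d_sq'' hχ₁' hg₂' hode₁,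
      d_A hχ₁' hg₁', d_A' hχ₁' hg₁' hg₂' hode₁, d_D hχ₁' hg₁',
      d_sq hχ₂', d_sq' hχ₂' hode₂, d_sq'' hχ₂' hg₂' hode₂,
      d_A hχ₂' hg₁', d_A' hχ₂' hg₁' hg₂' hode₂, d_D hχ₂' hg₁',
      d_mul hχ₁' hχ₂', d_mul' hχ₁' hχ₂' hode₁ hode₂, d_mul'' hχ₁' hχ₂' hg₂' hode₁ hode₂,
      d_Am hχ₁' hχ₂' hg₁', d_Am' hχ₁' hχ₂' hg₁' hg₂' hode₁ hode₂, d_Dm hχ₁' hχ₂' hg₁']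
    push_cast
    linear_combination (((-1:ℂ)) * ((Cint χ₁ g₁ t:ℝ) : ℂ) * ((Cint χ₂ g₁ t:ℝ) : ℂ) * I * f t x
      + ((1:ℂ)) * ((deriv χ₂ t:ℝ) : ℂ) * ((Cint χ₁ g₁ t:ℝ) : ℂ) * ((x:ℝ) : ℂ) * I * f t x
      + ((-1:ℂ)) * ((χ₂ t:ℝ) : ℂ) * ((Cint χ₁ g₁ t:ℝ) : ℂ) * px (fun p : ℝ × ℝ => f p.1 p.2) (t, x)
      + ((1:ℂ)) * ((deriv χ₁ t:ℝ) : ℂ) * ((Cint χ₂ g₁ t:ℝ) : ℂ) * ((x:ℝ) : ℂ) * I * f t x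
      + ((-1:ℂ)) * ((deriv χ₁ t:ℝ) : ℂ) * ((deriv χ₂ t:ℝ) : ℂ) * ((x:ℝ) : ℂ) * ((x:ℝ) : ℂ) * I * f t x
      + ((1/2:ℂ)) * ((deriv χ₁ t:ℝ) : ℂ) * ((χ₂ t:ℝ) : ℂ) * f t x
      + ((1:ℂ)) * ((deriv χ₁ t:ℝ) : ℂ) * ((χ₂ t:ℝ) : ℂ) * ((x:ℝ) : ℂ) * px (fun p : ℝ × ℝ => f p.1 p.2) (t, x)
      + ((-1:ℂ)) * ((χ₁ t:ℝ) : ℂ) * ((Cint χ₂ g₁ t:ℝ) : ℂ) * px (fun p : ℝ × ℝ => f p.1 p.2) (t, x)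
      + ((1/2:ℂ)) * ((χ₁ t:ℝ) : ℂ) * ((deriv χ₂ t:ℝ) : ℂ) * f t x
      + ((1:ℂ)) * ((χ₁ t:ℝ) : ℂ) * ((deriv χ₂ t:ℝ) : ℂ) * ((x:ℝ) : ℂ) * px (fun p : ℝ × ℝ => f p.1 p.2) (t, x)
      + ((2:ℂ)) * ((χ₁ t:ℝ) : ℂ) * ((χ₂ t:ℝ) : ℂ) * pt (fun p : ℝ × ℝ => f p.1 p.2) (t, x)
      + ((2:ℂ)) * ((χ₁ t:ℝ) : ℂ) * ((χ₂ t:ℝ) : ℂ) * ((g₂ t:ℝ) : ℂ) * ((x:ℝ) : ℂ) * ((x:ℝ) : ℂ) * I * f t x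
      + ((2:ℂ)) * ((χ₁ t:ℝ) : ℂ) * ((χ₂ t:ℝ) : ℂ) * ((g₁ t:ℝ) : ℂ) * ((x:ℝ) : ℂ) * I * f t x
      + ((2:ℂ)) * ((χ₁ t:ℝ) : ℂ) * ((χ₂ t:ℝ) : ℂ) * ((g₀ t:ℝ) : ℂ) * I * f t x) * hWc
end

section
/- Let g₀, g₁, g₂ : ℝ → ℝ be smooth and let χ₁, χ₂ : ℝ → ℝ be smooth solutions of χ'' + 2g₂χ = 0 satisfying χ₁(t)χ₂'(t) − χ₁'(t)χ₂(t) = 1 for all t. With φ_j, C_j, A_j, D_j, B_j and the operators L₁, L₂, L₃ defined as follows: φ₁ = χ₁², φ₂ = χ₂², φ₃ = 2χ₁χ₂; C_j(t) = ∫₀ᵗ χ_j g₁ (j = 1,2); A₁ = −χ₁C₁, A₂ = −χ₂C₂, A₃ = −(χ₁C₂ + χ₂C₁); D₁ = −C₁²/2, D₂ = −C₂²/2, D₃ = −C₁C₂; B_j(t,x) = −(i/4)φ_j''(t)x² − i A_j'(t)x + (1/4)φ_j'(t) + i g₀(t)φ_j(t) + i D_j(t); (L_j f)(t,x) = (−1)^{j+1}(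 φ_j(t) ∂_t f + ((1/2)φ_j'(t)x + A_j(t)) ∂_x f + B_j(t,x) f ). Define Ω f = (1/2)L₃(L₃ f) − L₃ f + 2 L₂(L₁ f). Then for every smooth f : ℝ² → ℂ and all (t,x): (Ω f)(t,x) = (1/2)[ (x − χ₁(t)C₂(t) + χ₂(t)C₁(t))² · ( 2i ∂_t f(t,x) + ∂_x² f(t,x) − 2(g₂(t)x² + g₁(t)x + g₀(t)) f(t,x) ) − (3/4) f(t,x) ]. -/
open Complex

/-- Second partial derivative in the space variable. -/
noncomputable def pderivXX (f : ℝ → ℝ → ℂ) (t x : ℝ) : ℂ :=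
  deriv (deriv (fun x' => f t x')) x

/-- The Casimir-type operator `Ω = (1/2)L₃² - L₃ + 2L₂L₁`. -/
noncomputable def Omega (g₀ g₁ χ₁ χ₂ : ℝ → ℝ) (f : ℝ → ℝ → ℂ) (t x : ℝ) : ℂ :=
  (1/2 : ℂ) * Lthree g₀ g₁ χ₁ χ₂ (Lthree g₀ g₁ χ₁ χ₂ f) t x
    - Lthree g₀ g₁ χ₁ χ₂ f t x
    + 2 * Ltwo g₀ g₁ χ₂ (Lone g₀ g₁ χ₁ f) t x

section AuxLemmas

/-- Existence of first and second partial derivative data for a smooth function of two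
real variables, with symmetry of the mixed partials. -/
lemma partials_exist (f : ℝ → ℝ → ℂ) (hf : ContDiff ℝ (⊤ : ℕ∞) fun p : ℝ × ℝ => f p.1 p.2) :
  ∃ fT fX fTT fTX fXX : ℝ → ℝ → ℂ,
    (∀ t x, HasDerivAt (fun t' => f t' x) (fT t x) t) ∧
    (∀ t x, HasDerivAt (fun x' => f t x') (fX t x) x) ∧
    (∀ t x, HasDerivAt (fun t' => fT t' x) (fTT t x) t) ∧
    (∀ t x, HasDerivAt (fun x' => fT t x') (fTX t x) x) ∧
    (∀ t x, HasDerivAt (fun t' => fX t' x) (fTX t x) t) ∧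
    (∀ t x, HasDerivAt (fun x' => fX t x') (fXX t x) x) := by
  set F : ℝ × ℝ → ℂ := fun p => f p.1 p.2 with hF
  have hslT : ∀ (G : ℝ × ℝ → ℂ), ContDiff ℝ (⊤ : ℕ∞) G → ∀ t x : ℝ,
      HasDerivAt (fun t' => G (t', x)) (fderiv ℝ G (t, x) (1, 0)) t := by
    intro G hG t x
    have h1 : HasDerivAt (fun t' : ℝ => ((t', x) : ℝ × ℝ)) ((1 : ℝ), (0 : ℝ)) t :=
      (hasDerivAt_id t).prodMk (hasDerivAt_const t x)
    exact ((hG.differentiable (by simp) (t, x)).hasFDerivAt).comp_hasDerivAt t h1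
  have hslX : ∀ (G : ℝ × ℝ → ℂ), ContDiff ℝ (⊤ : ℕ∞) G → ∀ t x : ℝ,
      HasDerivAt (fun x' => G (t, x')) (fderiv ℝ G (t, x) (0, 1)) x := by
    intro G hG t x
    have h1 : HasDerivAt (fun x' : ℝ => ((t, x') : ℝ × ℝ)) ((0 : ℝ), (1 : ℝ)) x :=
      (hasDerivAt_const x t).prodMk (hasDerivAt_id x)
    exact ((hG.differentiable (by simp) (t, x)).hasFDerivAt).comp_hasDerivAt x h1
  have hd1 : ContDiff ℝ (⊤ : ℕ∞) (fderiv ℝ F) := hf.fderiv_right (by simp)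
  have hGT : ContDiff ℝ (⊤ : ℕ∞) (fun p => fderiv ℝ F p ((1 : ℝ), (0 : ℝ))) :=
    hd1.clm_apply contDiff_const
  have hGX : ContDiff ℝ (⊤ : ℕ∞) (fun p => fderiv ℝ F p ((0 : ℝ), (1 : ℝ))) :=
    hd1.clm_apply contDiff_const
  have hsymm : ∀ t x : ℝ,
      fderiv ℝ (fun p => fderiv ℝ F p ((0:ℝ),(1:ℝ))) (t, x) ((1:ℝ),(0:ℝ))
        = fderiv ℝ (fun p => fderiv ℝ F p ((1:ℝ),(0:ℝ))) (t, x) ((0:ℝ),(1:ℝ)) := by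
    intro t x
    have happ : ∀ (v w : ℝ × ℝ), fderiv ℝ (fun p => fderiv ℝ F p v) (t, x) w
        = fderiv ℝ (fderiv ℝ F) (t, x) w v := by
      intro v w
      have hd : HasFDerivAt (fderiv ℝ F) (fderiv ℝ (fderiv ℝ F) (t, x)) (t, x) :=
        (hd1.differentiable (by simp) (t, x)).hasFDerivAt
      have := ((ContinuousLinearMap.apply ℝ ℂ v).hasFDerivAt.comp (t, x) hd).fderiv
      rw [show (fun p => fderiv ℝ F p v)
          = (ContinuousLinearMap.apply ℝ ℂ v) ∘ (fderiv ℝ F) from rfl, this]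
      rfl
    have hsym : IsSymmSndFDerivAt ℝ F (t, x) :=
      hf.contDiffAt.isSymmSndFDerivAt (by rw [minSmoothness_of_isRCLikeNormedField]; exact WithTop.coe_le_coe.mpr (le_top : (2 : ℕ∞) ≤ ⊤))
    rw [happ, happ, hsym.eq]
  refine ⟨fun t x => fderiv ℝ F (t, x) (1, 0), fun t x => fderiv ℝ F (t, x) (0, 1),
    fun t x => fderiv ℝ (fun p => fderiv ℝ F p ((1:ℝ),(0:ℝ))) (t, x) (1, 0),
    fun t x => fderiv ℝ (fun p => fderiv ℝ F p ((1:ℝ),(0:ℝ))) (t, x) (0, 1),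
    fun t x => fderiv ℝ (fun p => fderiv ℝ F p ((0:ℝ),(1:ℝ))) (t, x) (0, 1),
    hslT F hf, hslX F hf, hslT _ hGT, hslX _ hGT, ?_, hslX _ hGX⟩
  intro t x
  have h := hslT _ hGX t x
  rw [hsymm t x] at h
  exact h

/-- Value of a first-order operator `Lop` in terms of given partial-derivative data. -/
lemma Lop_value (s : ℂ) (g₀ φ φ' φ'' A A' D : ℝ → ℝ) (f fT fX : ℝ → ℝ → ℂ)
    (hφ : ∀ t, HasDerivAt φ (φ' t) t) (hφ' : ∀ t, HasDerivAt φ' (φ'' t) t)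
    (hA : ∀ t, HasDerivAt A (A' t) t)
    (hfT : ∀ t x, HasDerivAt (fun t' => f t' x) (fT t x) t)
    (hfX : ∀ t x, HasDerivAt (fun x' => f t x') (fX t x) x)
    (t x : ℝ) :
    Lop s φ A (Bcoef g₀ φ A D) f t x
      = s * ((φ t : ℂ) * fT t x
          + ((1/2 : ℂ) * (φ' t : ℂ) * (x : ℂ) + (A t : ℂ)) * fX t x
          + (-(I/4) * (φ'' t : ℂ) * (x : ℂ) ^ 2 + -I * (A' t : ℂ) * (x : ℂ)
              + (1/4 : ℂ) * (φ' t : ℂ) + I * (g₀ t : ℂ) * (φ t : ℂ) + I * (D t : ℂ))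
            * f t x) := by
  have hdφ : deriv φ = φ' := funext fun u => (hφ u).deriv
  unfold Lop Bcoef pderivT pderivX
  rw [hdφ, (hφ' t).deriv, (hA t).deriv, (hfT t x).deriv, (hfX t x).deriv]
  ring

/-- Time derivative of `Lop` applied to `f`. -/
lemma Lop_hasDerivAt_T (s : ℂ) (g₀ g₀' φ φ' φ'' φ''' A A' A'' D D' : ℝ → ℝ)
    (f fT fX fTT fTX : ℝ → ℝ → ℂ)
    (hg : ∀ t, HasDerivAt g₀ (g₀' t) t)
    (hφ : ∀ t, HasDerivAt φ (φ' t) t) (hφ' : ∀ t, HasDerivAt φ' (φ'' t) t)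
    (hφ'' : ∀ t, HasDerivAt φ'' (φ''' t) t)
    (hA : ∀ t, HasDerivAt A (A' t) t) (hA' : ∀ t, HasDerivAt A' (A'' t) t)
    (hD : ∀ t, HasDerivAt D (D' t) t)
    (hfT : ∀ t x, HasDerivAt (fun t' => f t' x) (fT t x) t)
    (hfX : ∀ t x, HasDerivAt (fun x' => f t x') (fX t x) x)
    (hfTT : ∀ t x, HasDerivAt (fun t' => fT t' x) (fTT t x) t)
    (hfXT : ∀ t x, HasDerivAt (fun t' => fX t' x) (fTX t x) t)
    (t x : ℝ) :
    HasDerivAt (fun t' => Lop s φ A (Bcoef g₀ φ A D) f t' x)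
      (s * ((φ' t : ℂ) * fT t x + (φ t : ℂ) * fTT t x
        + ((1/2 : ℂ) * (φ'' t : ℂ) * (x : ℂ) + (A' t : ℂ)) * fX t x
        + ((1/2 : ℂ) * (φ' t : ℂ) * (x : ℂ) + (A t : ℂ)) * fTX t x
        + (-(I/4) * (φ''' t : ℂ) * (x : ℂ) ^ 2 + -I * (A'' t : ℂ) * (x : ℂ)
            + (1/4 : ℂ) * (φ'' t : ℂ) + I * (g₀' t : ℂ) * (φ t : ℂ)
            + I * (g₀ t : ℂ) * (φ' t : ℂ) + I * (D' t : ℂ)) * f t x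
        + (-(I/4) * (φ'' t : ℂ) * (x : ℂ) ^ 2 + -I * (A' t : ℂ) * (x : ℂ)
            + (1/4 : ℂ) * (φ' t : ℂ) + I * (g₀ t : ℂ) * (φ t : ℂ) + I * (D t : ℂ))
          * fT t x)) t := by
  have hfun : (fun t' => Lop s φ A (Bcoef g₀ φ A D) f t' x) = fun t' =>
      s * ((φ t' : ℂ) * fT t' x
        + ((1/2 : ℂ) * (φ' t' : ℂ) * (x : ℂ) + (A t' : ℂ)) * fX t' x
        + (-(I/4) * (φ'' t' : ℂ) * (x : ℂ) ^ 2 + -I * (A' t' : ℂ) * (x : ℂ)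
            + (1/4 : ℂ) * (φ' t' : ℂ) + I * (g₀ t' : ℂ) * (φ t' : ℂ) + I * (D t' : ℂ))
          * f t' x) :=
    funext fun u => Lop_value s g₀ φ φ' φ'' A A' D f fT fX hφ hφ' hA hfT hfX u x
  rw [hfun]
  have e1 := ((hφ t).ofReal_comp).mul (hfTT t x)
  have e2 := ((((hφ' t).ofReal_comp.const_mul (1/2 : ℂ)).mul_const ((x : ℝ) : ℂ)).add
    ((hA t).ofReal_comp)).mul (hfXT t x)
  have b1 := ((hφ'' t).ofReal_comp.const_mul (-(I/4))).mul_const ((x : ℂ) ^ 2)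
  have b2 := ((hA' t).ofReal_comp.const_mul (-I)).mul_const ((x : ℝ) : ℂ)
  have b3 := (hφ' t).ofReal_comp.const_mul (1/4 : ℂ)
  have b4 := ((hg t).ofReal_comp.const_mul I).mul ((hφ t).ofReal_comp)
  have b5 := (hD t).ofReal_comp.const_mul I
  have e3 := ((((b1.add b2).add b3).add b4).add b5).mul (hfT t x)
  have h := ((e1.add e2).add e3).const_mul s
  exact h.congr_deriv (by simp only [Pi.add_apply, Pi.mul_apply]; push_cast; ring)

/-- Space derivative of `Lop` applied to `f`. -/
lemma Lop_hasDerivAt_X (s : ℂ) (g₀ φ φ' φ'' A A' D : ℝ → ℝ)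
    (f fT fX fTX fXX : ℝ → ℝ → ℂ)
    (hφ : ∀ t, HasDerivAt φ (φ' t) t) (hφ' : ∀ t, HasDerivAt φ' (φ'' t) t)
    (hA : ∀ t, HasDerivAt A (A' t) t)
    (hfT : ∀ t x, HasDerivAt (fun t' => f t' x) (fT t x) t)
    (hfX : ∀ t x, HasDerivAt (fun x' => f t x') (fX t x) x)
    (hfTX : ∀ t x, HasDerivAt (fun x' => fT t x') (fTX t x) x)
    (hfXX : ∀ t x, HasDerivAt (fun x' => fX t x') (fXX t x) x)
    (t x : ℝ) :
    HasDerivAt (fun x' => Lop s φ A (Bcoef g₀ φ A D) f t x')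
      (s * ((φ t : ℂ) * fTX t x + (1/2 : ℂ) * (φ' t : ℂ) * fX t x
        + ((1/2 : ℂ) * (φ' t : ℂ) * (x : ℂ) + (A t : ℂ)) * fXX t x
        + (-(I/2) * (φ'' t : ℂ) * (x : ℂ) + -I * (A' t : ℂ)) * f t x
        + (-(I/4) * (φ'' t : ℂ) * (x : ℂ) ^ 2 + -I * (A' t : ℂ) * (x : ℂ)
            + (1/4 : ℂ) * (φ' t : ℂ) + I * (g₀ t : ℂ) * (φ t : ℂ) + I * (D t : ℂ))
          * fX t x)) x := by
  have hfun : (fun x' => Lop s φ A (Bcoef g₀ φ A D) f t x') = fun x' =>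
      s * ((φ t : ℂ) * fT t x'
        + ((1/2 : ℂ) * (φ' t : ℂ) * (x' : ℂ) + (A t : ℂ)) * fX t x'
        + (-(I/4) * (φ'' t : ℂ) * ((x' : ℂ) * (x' : ℂ)) + -I * (A' t : ℂ) * (x' : ℂ)
            + (1/4 : ℂ) * (φ' t : ℂ) + I * (g₀ t : ℂ) * (φ t : ℂ) + I * (D t : ℂ))
          * f t x') :=
    funext fun u => (Lop_value s g₀ φ φ' φ'' A A' D f fT fX hφ hφ' hA hfT hfX t u).trans
      (by ring)
  rw [hfun]
  have hx : HasDerivAt (fun x' : ℝ => (x' : ℂ)) 1 x := by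
    simpa using (hasDerivAt_id x).ofReal_comp
  have e1 := (hfTX t x).const_mul ((φ t : ℝ) : ℂ)
  have e2 := ((hx.const_mul ((1/2 : ℂ) * ((φ' t : ℝ) : ℂ))).add_const ((A t : ℝ) : ℂ)).mul
    (hfXX t x)
  have b1 := (hx.mul hx).const_mul (-(I/4) * ((φ'' t : ℝ) : ℂ))
  have b2 := hx.const_mul (-I * ((A' t : ℝ) : ℂ))
  have e3 := ((((b1.add b2).add_const ((1/4 : ℂ) * ((φ' t : ℝ) : ℂ))).add_const
    (I * ((g₀ t : ℝ) : ℂ) * ((φ t : ℝ) : ℂ))).add_const (I * ((D t : ℝ) : ℂ))).mul (hfX t x)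
  have h := ((e1.add e2).add e3).const_mul s
  exact h.congr_deriv (by simp only [Pi.add_apply, Pi.mul_apply]; push_cast; ring)

end AuxLemmas

/-- The Casimir element `Ω = (1/2)L₃² - L₃ + 2L₂L₁` acts by
`(1/2)[(x - χ₁C₂ + χ₂C₁)² (□ - 2V) - 3/4]` where `□ = 2i∂_t + ∂_x²` and
`V(t,x) = g₂(t)x² + g₁(t)x + g₀(t)`. -/
theorem casimir_multiplier_identity
    (g₀ g₁ g₂ χ₁ χ₂ : ℝ → ℝ)
    (hg₀ : ContDiff ℝ (⊤ : ℕ∞) g₀) (hg₁ : ContDiff ℝ (⊤ : ℕ∞) g₁) (hg₂ : ContDiff ℝ (⊤ : ℕ∞) g₂)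
    (hχ₁ : ContDiff ℝ (⊤ : ℕ∞) χ₁) (hχ₂ : ContDiff ℝ (⊤ : ℕ∞) χ₂)
    (hode₁ : ∀ t, deriv (deriv χ₁) t + 2 * g₂ t * χ₁ t = 0)
    (hode₂ : ∀ t, deriv (deriv χ₂) t + 2 * g₂ t * χ₂ t = 0)
    (hW : ∀ t, χ₁ t * deriv χ₂ t - deriv χ₁ t * χ₂ t = 1)
    (f : ℝ → ℝ → ℂ) (hf : ContDiff ℝ (⊤ : ℕ∞) (fun p : ℝ × ℝ => f p.1 p.2)) :
    ∀ t x, Omega g₀ g₁ χ₁ χ₂ f t x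
      = (1/2 : ℂ) * (((x - χ₁ t * Cint χ₂ g₁ t + χ₂ t * Cint χ₁ g₁ t : ℝ) : ℂ) ^ 2
          * (2 * I * pderivT f t x + pderivXX f t x
              - 2 * ((g₂ t * x ^ 2 + g₁ t * x + g₀ t : ℝ) : ℂ) * f t x)
        - (3/4 : ℂ) * f t x) := by
  obtain ⟨fT, fX, fTT, fTX, fXX, hfT, hfX, hfTT, hfTX, hfXT, hfXX⟩ := partials_exist f hf
  have hχ₁d : ContDiff ℝ (⊤ : ℕ∞) (deriv χ₁) := (hχ₁.fderiv_right (by simp)).clm_apply contDiff_const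
  have hχ₂d : ContDiff ℝ (⊤ : ℕ∞) (deriv χ₂) := (hχ₂.fderiv_right (by simp)).clm_apply contDiff_const
  have hdχ₁ : ∀ u, HasDerivAt χ₁ (deriv χ₁ u) u :=
    fun u => (hχ₁.differentiable (by simp) u).hasDerivAt
  have hdχ₂ : ∀ u, HasDerivAt χ₂ (deriv χ₂ u) u :=
    fun u => (hχ₂.differentiable (by simp) u).hasDerivAt
  have hd2χ₁ : ∀ u, HasDerivAt (deriv χ₁) (-(2 * (g₂ u * χ₁ u))) u := fun u =>
    ((hχ₁d.differentiable (by simp) u).hasDerivAt).congr_deriv (by have := hode₁ u; linarith)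
  have hd2χ₂ : ∀ u, HasDerivAt (deriv χ₂) (-(2 * (g₂ u * χ₂ u))) u := fun u =>
    ((hχ₂d.differentiable (by simp) u).hasDerivAt).congr_deriv (by have := hode₂ u; linarith)
  have hdg₀ : ∀ u, HasDerivAt g₀ (deriv g₀ u) u :=
    fun u => (hg₀.differentiable (by simp) u).hasDerivAt
  have hdg₁ : ∀ u, HasDerivAt g₁ (deriv g₁ u) u :=
    fun u => (hg₁.differentiable (by simp) u).hasDerivAt
  have hdg₂ : ∀ u, HasDerivAt g₂ (deriv g₂ u) u :=
    fun u => (hg₂.differentiable (by simp) u).hasDerivAt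
  have hcont₁ : Continuous fun u => χ₁ u * g₁ u := hχ₁.continuous.mul hg₁.continuous
  have hcont₂ : Continuous fun u => χ₂ u * g₁ u := hχ₂.continuous.mul hg₁.continuous
  have hC₁ : ∀ u, HasDerivAt (Cint χ₁ g₁) (χ₁ u * g₁ u) u := fun u =>
    intervalIntegral.integral_hasDerivAt_right (hcont₁.intervalIntegrable 0 u)
      hcont₁.aestronglyMeasurable.stronglyMeasurableAtFilter hcont₁.continuousAt
  have hC₂ : ∀ u, HasDerivAt (Cint χ₂ g₁) (χ₂ u * g₁ u) u := fun u =>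
    intervalIntegral.integral_hasDerivAt_right (hcont₂.intervalIntegrable 0 u)
      hcont₂.aestronglyMeasurable.stronglyMeasurableAtFilter hcont₂.continuousAt
  -- coefficient chains for L₁
  have hφ₁ : ∀ u, HasDerivAt (fun v => χ₁ v ^ 2) (2 * χ₁ u * deriv χ₁ u) u := fun u =>
    ((hdχ₁ u).pow 2).congr_deriv (by ring)
  have hφ₁' : ∀ u, HasDerivAt (fun v => 2 * χ₁ v * deriv χ₁ v)
      (2 * deriv χ₁ u ^ 2 - 4 * (g₂ u * χ₁ u ^ 2)) u := fun u =>
    (((hdχ₁ u).const_mul 2).mul (hd2χ₁ u)).congr_deriv (by ring)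
  have hφ₁'' : ∀ u, HasDerivAt (fun v => 2 * deriv χ₁ v ^ 2 - 4 * (g₂ v * χ₁ v ^ 2))
      (-(16 * (g₂ u * (χ₁ u * deriv χ₁ u))) - 4 * (deriv g₂ u * χ₁ u ^ 2)) u := fun u =>
    ((((hd2χ₁ u).pow 2).const_mul 2).sub
      (((hdg₂ u).mul ((hdχ₁ u).pow 2)).const_mul 4)).congr_deriv (by simp only [Pi.mul_apply, Pi.pow_apply]; ring)
  have hA₁ : ∀ u, HasDerivAt (fun v => -(χ₁ v * Cint χ₁ g₁ v))
      (-(deriv χ₁ u * Cint χ₁ g₁ u + χ₁ u * (χ₁ u * g₁ u))) u := fun u =>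
    (((hdχ₁ u).mul (hC₁ u)).neg).congr_deriv (by ring)
  have hA₁' : ∀ u, HasDerivAt (fun v => -(deriv χ₁ v * Cint χ₁ g₁ v + χ₁ v * (χ₁ v * g₁ v)))
      (2 * (g₂ u * (χ₁ u * Cint χ₁ g₁ u)) - 3 * (χ₁ u * (deriv χ₁ u * g₁ u))
        - χ₁ u ^ 2 * deriv g₁ u) u := fun u =>
    ((((hd2χ₁ u).mul (hC₁ u)).add
      ((hdχ₁ u).mul ((hdχ₁ u).mul (hdg₁ u)))).neg).congr_deriv (by simp only [Pi.mul_apply, Pi.pow_apply]; ring)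
  have hD₁ : ∀ u, HasDerivAt (fun v => -(Cint χ₁ g₁ v ^ 2) / 2)
      (-(Cint χ₁ g₁ u * (χ₁ u * g₁ u))) u := fun u =>
    ((((hC₁ u).pow 2).neg).div_const 2).congr_deriv (by ring)
  -- coefficient chains for L₂
  have hφ₂ : ∀ u, HasDerivAt (fun v => χ₂ v ^ 2) (2 * χ₂ u * deriv χ₂ u) u := fun u =>
    ((hdχ₂ u).pow 2).congr_deriv (by ring)
  have hφ₂' : ∀ u, HasDerivAt (fun v => 2 * χ₂ v * deriv χ₂ v)
      (2 * deriv χ₂ u ^ 2 - 4 * (g₂ u * χ₂ u ^ 2)) u := fun u =>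
    (((hdχ₂ u).const_mul 2).mul (hd2χ₂ u)).congr_deriv (by ring)
  have hφ₂'' : ∀ u, HasDerivAt (fun v => 2 * deriv χ₂ v ^ 2 - 4 * (g₂ v * χ₂ v ^ 2))
      (-(16 * (g₂ u * (χ₂ u * deriv χ₂ u))) - 4 * (deriv g₂ u * χ₂ u ^ 2)) u := fun u =>
    ((((hd2χ₂ u).pow 2).const_mul 2).sub
      (((hdg₂ u).mul ((hdχ₂ u).pow 2)).const_mul 4)).congr_deriv (by simp only [Pi.mul_apply, Pi.pow_apply]; ring)
  have hA₂ : ∀ u, HasDerivAt (fun v => -(χ₂ v * Cint χ₂ g₁ v))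
      (-(deriv χ₂ u * Cint χ₂ g₁ u + χ₂ u * (χ₂ u * g₁ u))) u := fun u =>
    (((hdχ₂ u).mul (hC₂ u)).neg).congr_deriv (by ring)
  have hA₂' : ∀ u, HasDerivAt (fun v => -(deriv χ₂ v * Cint χ₂ g₁ v + χ₂ v * (χ₂ v * g₁ v)))
      (2 * (g₂ u * (χ₂ u * Cint χ₂ g₁ u)) - 3 * (χ₂ u * (deriv χ₂ u * g₁ u))
        - χ₂ u ^ 2 * deriv g₁ u) u := fun u =>
    ((((hd2χ₂ u).mul (hC₂ u)).add
      ((hdχ₂ u).mul ((hdχ₂ u).mul (hdg₁ u)))).neg).congr_deriv (by simp only [Pi.mul_apply, Pi.pow_apply]; ring)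
  have hD₂ : ∀ u, HasDerivAt (fun v => -(Cint χ₂ g₁ v ^ 2) / 2)
      (-(Cint χ₂ g₁ u * (χ₂ u * g₁ u))) u := fun u =>
    ((((hC₂ u).pow 2).neg).div_const 2).congr_deriv (by ring)
  -- coefficient chains for L₃
  have hφ₃ : ∀ u, HasDerivAt (fun v => 2 * χ₁ v * χ₂ v)
      (2 * (deriv χ₁ u * χ₂ u + χ₁ u * deriv χ₂ u)) u := fun u =>
    (((hdχ₁ u).const_mul 2).mul (hdχ₂ u)).congr_deriv (by ring)
  have hφ₃' : ∀ u, HasDerivAt (fun v => 2 * (deriv χ₁ v * χ₂ v + χ₁ v * deriv χ₂ v))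
      (4 * (deriv χ₁ u * deriv χ₂ u) - 8 * (g₂ u * (χ₁ u * χ₂ u))) u := fun u =>
    ((((hd2χ₁ u).mul (hdχ₂ u)).add ((hdχ₁ u).mul (hd2χ₂ u))).const_mul 2).congr_deriv (by ring)
  have hφ₃'' : ∀ u, HasDerivAt (fun v => 4 * (deriv χ₁ v * deriv χ₂ v) - 8 * (g₂ v * (χ₁ v * χ₂ v)))
      (-(16 * (g₂ u * (χ₁ u * deriv χ₂ u + deriv χ₁ u * χ₂ u)))
        - 8 * (deriv g₂ u * (χ₁ u * χ₂ u))) u := fun u =>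
    ((((hd2χ₁ u).mul (hd2χ₂ u)).const_mul 4).sub
      (((hdg₂ u).mul ((hdχ₁ u).mul (hdχ₂ u))).const_mul 8)).congr_deriv (by simp only [Pi.mul_apply, Pi.pow_apply]; ring)
  have hA₃ : ∀ u, HasDerivAt (fun v => -(χ₁ v * Cint χ₂ g₁ v + χ₂ v * Cint χ₁ g₁ v))
      (-(deriv χ₁ u * Cint χ₂ g₁ u + χ₁ u * (χ₂ u * g₁ u)
        + (deriv χ₂ u * Cint χ₁ g₁ u + χ₂ u * (χ₁ u * g₁ u)))) u := fun u =>
    ((((hdχ₁ u).mul (hC₂ u)).add ((hdχ₂ u).mul (hC₁ u))).neg).congr_deriv (by ring)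
  have hA₃' : ∀ u, HasDerivAt (fun v => -(deriv χ₁ v * Cint χ₂ g₁ v + χ₁ v * (χ₂ v * g₁ v)
        + (deriv χ₂ v * Cint χ₁ g₁ v + χ₂ v * (χ₁ v * g₁ v))))
      (2 * (g₂ u * (χ₁ u * Cint χ₂ g₁ u + χ₂ u * Cint χ₁ g₁ u))
        - 3 * (g₁ u * (deriv χ₁ u * χ₂ u + χ₁ u * deriv χ₂ u))
        - 2 * (deriv g₁ u * (χ₁ u * χ₂ u))) u := fun u =>
    (((((hd2χ₁ u).mul (hC₂ u)).add ((hdχ₁ u).mul ((hdχ₂ u).mul (hdg₁ u)))).add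
      ((((hd2χ₂ u).mul (hC₁ u)).add
        ((hdχ₂ u).mul ((hdχ₁ u).mul (hdg₁ u)))))).neg).congr_deriv (by simp only [Pi.mul_apply, Pi.pow_apply]; ring)
  have hD₃ : ∀ u, HasDerivAt (fun v => -(Cint χ₁ g₁ v * Cint χ₂ g₁ v))
      (-(χ₁ u * g₁ u * Cint χ₂ g₁ u + Cint χ₁ g₁ u * (χ₂ u * g₁ u))) u := fun u =>
    (((hC₁ u).mul (hC₂ u)).neg).congr_deriv (by ring)
  -- derivative data for L₁ f and L₃ f
  have h1T := fun (u y : ℝ) => Lop_hasDerivAt_T 1 g₀ (deriv g₀) (fun v => χ₁ v ^ 2) (fun v => 2 * χ₁ v * deriv χ₁ v) (fun v => 2 * deriv χ₁ v ^ 2 - 4 * (g₂ v * χ₁ v ^ 2)) (fun v => -(16 * (g₂ v * (χ₁ v * deriv χ₁ v))) - 4 * (deriv g₂ v * χ₁ v ^ 2))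
    (fun v => -(χ₁ v * Cint χ₁ g₁ v)) (fun v => -(deriv χ₁ v * Cint χ₁ g₁ v + χ₁ v * (χ₁ v * g₁ v)))
    (fun v => 2 * (g₂ v * (χ₁ v * Cint χ₁ g₁ v)) - 3 * (χ₁ v * (deriv χ₁ v * g₁ v)) - χ₁ v ^ 2 * deriv g₁ v)
    (fun v => -(Cint χ₁ g₁ v ^ 2) / 2) (fun v => -(Cint χ₁ g₁ v * (χ₁ v * g₁ v)))
    f fT fX fTT fTX hdg₀ hφ₁ hφ₁' hφ₁'' hA₁ hA₁' hD₁ hfT hfX hfTT hfXT u y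
  have h1X := fun (u y : ℝ) => Lop_hasDerivAt_X 1 g₀ (fun v => χ₁ v ^ 2) (fun v => 2 * χ₁ v * deriv χ₁ v) (fun v => 2 * deriv χ₁ v ^ 2 - 4 * (g₂ v * χ₁ v ^ 2)) (fun v => -(χ₁ v * Cint χ₁ g₁ v)) (fun v => -(deriv χ₁ v * Cint χ₁ g₁ v + χ₁ v * (χ₁ v * g₁ v))) (fun v => -(Cint χ₁ g₁ v ^ 2) / 2)
    f fT fX fTX fXX hφ₁ hφ₁' hA₁ hfT hfX hfTX hfXX u y
  have h3T := fun (u y : ℝ) => Lop_hasDerivAt_T 1 g₀ (deriv g₀) (fun v => 2 * χ₁ v * χ₂ v) (fun v => 2 * (deriv χ₁ v * χ₂ v + χ₁ v * deriv χ₂ v)) (fun v => 4 * (deriv χ₁ v * deriv χ₂ v) - 8 * (g₂ v * (χ₁ v * χ₂ v))) (fun v => -(16 * (g₂ v * (χ₁ v * deriv χ₂ v + deriv χ₁ v * χ₂ v))) - 8 * (deriv g₂ v * (χ₁ v * χ₂ v)))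
    (fun v => -(χ₁ v * Cint χ₂ g₁ v + χ₂ v * Cint χ₁ g₁ v)) (fun v => -(deriv χ₁ v * Cint χ₂ g₁ v + χ₁ v * (χ₂ v * g₁ v) + (deriv χ₂ v * Cint χ₁ g₁ v + χ₂ v * (χ₁ v * g₁ v))))
    (fun v => 2 * (g₂ v * (χ₁ v * Cint χ₂ g₁ v + χ₂ v * Cint χ₁ g₁ v)) - 3 * (g₁ v * (deriv χ₁ v * χ₂ v + χ₁ v * deriv χ₂ v)) - 2 * (deriv g₁ v * (χ₁ v * χ₂ v)))
    (fun v => -(Cint χ₁ g₁ v * Cint χ₂ g₁ v)) (fun v => -(χ₁ v * g₁ v * Cint χ₂ g₁ v + Cint χ₁ g₁ v * (χ₂ v * g₁ v)))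
    f fT fX fTT fTX hdg₀ hφ₃ hφ₃' hφ₃'' hA₃ hA₃' hD₃ hfT hfX hfTT hfXT u y
  have h3X := fun (u y : ℝ) => Lop_hasDerivAt_X 1 g₀ (fun v => 2 * χ₁ v * χ₂ v) (fun v => 2 * (deriv χ₁ v * χ₂ v + χ₁ v * deriv χ₂ v)) (fun v => 4 * (deriv χ₁ v * deriv χ₂ v) - 8 * (g₂ v * (χ₁ v * χ₂ v))) (fun v => -(χ₁ v * Cint χ₂ g₁ v + χ₂ v * Cint χ₁ g₁ v)) (fun v => -(deriv χ₁ v * Cint χ₂ g₁ v + χ₁ v * (χ₂ v * g₁ v) + (deriv χ₂ v * Cint χ₁ g₁ v + χ₂ v * (χ₁ v * g₁ v)))) (fun v => -(Cint χ₁ g₁ v * Cint χ₂ g₁ v))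
    f fT fX fTX fXX hφ₃ hφ₃' hA₃ hfT hfX hfTX hfXX u y
  intro t x
  have h1V := Lop_value 1 g₀ (fun v => χ₁ v ^ 2) (fun v => 2 * χ₁ v * deriv χ₁ v) (fun v => 2 * deriv χ₁ v ^ 2 - 4 * (g₂ v * χ₁ v ^ 2)) (fun v => -(χ₁ v * Cint χ₁ g₁ v)) (fun v => -(deriv χ₁ v * Cint χ₁ g₁ v + χ₁ v * (χ₁ v * g₁ v))) (fun v => -(Cint χ₁ g₁ v ^ 2) / 2) f fT fX hφ₁ hφ₁' hA₁ hfT hfX t x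
  have h3V := Lop_value 1 g₀ (fun v => 2 * χ₁ v * χ₂ v) (fun v => 2 * (deriv χ₁ v * χ₂ v + χ₁ v * deriv χ₂ v)) (fun v => 4 * (deriv χ₁ v * deriv χ₂ v) - 8 * (g₂ v * (χ₁ v * χ₂ v))) (fun v => -(χ₁ v * Cint χ₂ g₁ v + χ₂ v * Cint χ₁ g₁ v)) (fun v => -(deriv χ₁ v * Cint χ₂ g₁ v + χ₁ v * (χ₂ v * g₁ v) + (deriv χ₂ v * Cint χ₁ g₁ v + χ₂ v * (χ₁ v * g₁ v)))) (fun v => -(Cint χ₁ g₁ v * Cint χ₂ g₁ v)) f fT fX hφ₃ hφ₃' hA₃ hfT hfX t x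
  have h33V := Lop_value 1 g₀ (fun v => 2 * χ₁ v * χ₂ v) (fun v => 2 * (deriv χ₁ v * χ₂ v + χ₁ v * deriv χ₂ v)) (fun v => 4 * (deriv χ₁ v * deriv χ₂ v) - 8 * (g₂ v * (χ₁ v * χ₂ v))) (fun v => -(χ₁ v * Cint χ₂ g₁ v + χ₂ v * Cint χ₁ g₁ v)) (fun v => -(deriv χ₁ v * Cint χ₂ g₁ v + χ₁ v * (χ₂ v * g₁ v) + (deriv χ₂ v * Cint χ₁ g₁ v + χ₂ v * (χ₁ v * g₁ v)))) (fun v => -(Cint χ₁ g₁ v * Cint χ₂ g₁ v)) _ _ _ hφ₃ hφ₃' hA₃ h3T h3X t x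
  have h21V := Lop_value (-1) g₀ (fun v => χ₂ v ^ 2) (fun v => 2 * χ₂ v * deriv χ₂ v) (fun v => 2 * deriv χ₂ v ^ 2 - 4 * (g₂ v * χ₂ v ^ 2)) (fun v => -(χ₂ v * Cint χ₂ g₁ v)) (fun v => -(deriv χ₂ v * Cint χ₂ g₁ v + χ₂ v * (χ₂ v * g₁ v))) (fun v => -(Cint χ₂ g₁ v ^ 2) / 2) _ _ _ hφ₂ hφ₂' hA₂ h1T h1X t x
  have hpT : pderivT f t x = fT t x := (hfT t x).deriv
  have hpXX : pderivXX f t x = fXX t x := by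
    unfold pderivXX
    rw [show (deriv fun x' => f t x') = fun x' => fX t x' from funext fun u => (hfX t u).deriv]
    exact (hfXX t x).deriv
  have hWc : (χ₁ t : ℂ) * ((deriv χ₂ t : ℝ) : ℂ) - ((deriv χ₁ t : ℝ) : ℂ) * (χ₂ t : ℂ) = 1 := by
    exact_mod_cast congrArg Complex.ofReal (hW t)
  unfold Omega Lthree Ltwo Lone
  rw [h33V, h21V, h3V, h1V, hpT, hpXX]
  push_cast
  have hII : I * I = -1 := Complex.I_mul_I
  linear_combination
    ((-3/8 : ℂ) * f t x
      + (1/2 : ℂ) * (x : ℂ) ^ 2 * fXX t x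
      + (1 : ℂ) * (x : ℂ) ^ 2 * fT t x * I
      + (-1 : ℂ) * (g₂ t : ℂ) * (x : ℂ) ^ 4 * f t x
      + (-1 : ℂ) * (g₁ t : ℂ) * (x : ℂ) ^ 3 * f t x
      + (-1 : ℂ) * (g₀ t : ℂ) * (x : ℂ) ^ 2 * f t x
      + (-1 : ℂ) * (Cint χ₁ g₁ t : ℂ) * (Cint χ₂ g₁ t : ℂ) * f t x * I
      + (1 : ℂ) * ((deriv χ₂ t : ℝ) : ℂ) * (Cint χ₁ g₁ t : ℂ) * (x : ℂ) * f t x * I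
      + (1 : ℂ) * ((deriv χ₁ t : ℝ) : ℂ) * (Cint χ₂ g₁ t : ℂ) * (x : ℂ) * f t x * I
      + (-1 : ℂ) * ((deriv χ₁ t : ℝ) : ℂ) * ((deriv χ₂ t : ℝ) : ℂ) * (x : ℂ) ^ 2 * f t x * I
      + (-1 : ℂ) * (χ₂ t : ℂ) * (Cint χ₁ g₁ t : ℂ) * fX t x
      + (1 : ℂ) * (χ₂ t : ℂ) * (Cint χ₁ g₁ t : ℂ) * (x : ℂ) * fXX t x
      + (2 : ℂ) * (χ₂ t : ℂ) * (Cint χ₁ g₁ t : ℂ) * (x : ℂ) * fT t x * I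
      + (-2 : ℂ) * (χ₂ t : ℂ) * (Cint χ₁ g₁ t : ℂ) * (g₂ t : ℂ) * (x : ℂ) ^ 3 * f t x
      + (-2 : ℂ) * (χ₂ t : ℂ) * (Cint χ₁ g₁ t : ℂ) * (g₁ t : ℂ) * (x : ℂ) ^ 2 * f t x
      + (-2 : ℂ) * (χ₂ t : ℂ) * (Cint χ₁ g₁ t : ℂ) * (g₀ t : ℂ) * (x : ℂ) * f t x
      + (7/8 : ℂ) * (χ₂ t : ℂ) * ((deriv χ₁ t : ℝ) : ℂ) * f t x
      + (1 : ℂ) * (χ₂ t : ℂ) * ((deriv χ₁ t : ℝ) : ℂ) * (x : ℂ) * fX t x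
      + (-1/2 : ℂ) * (χ₂ t : ℂ) * ((deriv χ₁ t : ℝ) : ℂ) * (x : ℂ) ^ 2 * fXX t x
      + (-1 : ℂ) * (χ₂ t : ℂ) * ((deriv χ₁ t : ℝ) : ℂ) * (x : ℂ) ^ 2 * fT t x * I
      + (1 : ℂ) * (χ₂ t : ℂ) * ((deriv χ₁ t : ℝ) : ℂ) * (g₂ t : ℂ) * (x : ℂ) ^ 4 * f t x
      + (1 : ℂ) * (χ₂ t : ℂ) * ((deriv χ₁ t : ℝ) : ℂ) * (g₁ t : ℂ) * (x : ℂ) ^ 3 * f t x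
      + (1 : ℂ) * (χ₂ t : ℂ) * ((deriv χ₁ t : ℝ) : ℂ) * (g₀ t : ℂ) * (x : ℂ) ^ 2 * f t x
      + (-1 : ℂ) * (χ₁ t : ℂ) * (Cint χ₂ g₁ t : ℂ) * fX t x
      + (-1 : ℂ) * (χ₁ t : ℂ) * (Cint χ₂ g₁ t : ℂ) * (x : ℂ) * fXX t x
      + (-2 : ℂ) * (χ₁ t : ℂ) * (Cint χ₂ g₁ t : ℂ) * (x : ℂ) * fT t x * I
      + (2 : ℂ) * (χ₁ t : ℂ) * (Cint χ₂ g₁ t : ℂ) * (g₂ t : ℂ) * (x : ℂ) ^ 3 * f t x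
      + (2 : ℂ) * (χ₁ t : ℂ) * (Cint χ₂ g₁ t : ℂ) * (g₁ t : ℂ) * (x : ℂ) ^ 2 * f t x
      + (2 : ℂ) * (χ₁ t : ℂ) * (Cint χ₂ g₁ t : ℂ) * (g₀ t : ℂ) * (x : ℂ) * f t x
      + (1/8 : ℂ) * (χ₁ t : ℂ) * ((deriv χ₂ t : ℝ) : ℂ) * f t x
      + (1 : ℂ) * (χ₁ t : ℂ) * ((deriv χ₂ t : ℝ) : ℂ) * (x : ℂ) * fX t x
      + (1/2 : ℂ) * (χ₁ t : ℂ) * ((deriv χ₂ t : ℝ) : ℂ) * (x : ℂ) ^ 2 * fXX t x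
      + (1 : ℂ) * (χ₁ t : ℂ) * ((deriv χ₂ t : ℝ) : ℂ) * (x : ℂ) ^ 2 * fT t x * I
      + (-1 : ℂ) * (χ₁ t : ℂ) * ((deriv χ₂ t : ℝ) : ℂ) * (g₂ t : ℂ) * (x : ℂ) ^ 4 * f t x
      + (-1 : ℂ) * (χ₁ t : ℂ) * ((deriv χ₂ t : ℝ) : ℂ) * (g₁ t : ℂ) * (x : ℂ) ^ 3 * f t x
      + (-1 : ℂ) * (χ₁ t : ℂ) * ((deriv χ₂ t : ℝ) : ℂ) * (g₀ t : ℂ) * (x : ℂ) ^ 2 * f t x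
      + (2 : ℂ) * (χ₁ t : ℂ) * (χ₂ t : ℂ) * fT t x
      + (2 : ℂ) * (χ₁ t : ℂ) * (χ₂ t : ℂ) * (g₂ t : ℂ) * (x : ℂ) ^ 2 * f t x * I
      + (2 : ℂ) * (χ₁ t : ℂ) * (χ₂ t : ℂ) * (g₁ t : ℂ) * (x : ℂ) * f t x * I
      + (2 : ℂ) * (χ₁ t : ℂ) * (χ₂ t : ℂ) * (g₀ t : ℂ) * f t x * I) * hWc
    + ((1 : ℂ) * (χ₂ t : ℂ) ^ 2 * (Cint χ₁ g₁ t : ℂ) ^ 2 * (g₂ t : ℂ) * (x : ℂ) ^ 2 * f t x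
      + (1 : ℂ) * (χ₂ t : ℂ) ^ 2 * (Cint χ₁ g₁ t : ℂ) ^ 2 * (g₁ t : ℂ) * (x : ℂ) * f t x
      + (1 : ℂ) * (χ₂ t : ℂ) ^ 2 * (Cint χ₁ g₁ t : ℂ) ^ 2 * (g₀ t : ℂ) * f t x
      + (-2 : ℂ) * (χ₂ t : ℂ) ^ 2 * ((deriv χ₁ t : ℝ) : ℂ) * (Cint χ₁ g₁ t : ℂ) * (g₂ t : ℂ) * (x : ℂ) ^ 3 * f t x
      + (-2 : ℂ) * (χ₂ t : ℂ) ^ 2 * ((deriv χ₁ t : ℝ) : ℂ) * (Cint χ₁ g₁ t : ℂ) * (g₁ t : ℂ) * (x : ℂ) ^ 2 * f t x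
      + (-2 : ℂ) * (χ₂ t : ℂ) ^ 2 * ((deriv χ₁ t : ℝ) : ℂ) * (Cint χ₁ g₁ t : ℂ) * (g₀ t : ℂ) * (x : ℂ) * f t x
      + (1 : ℂ) * (χ₂ t : ℂ) ^ 2 * ((deriv χ₁ t : ℝ) : ℂ) ^ 2 * (g₂ t : ℂ) * (x : ℂ) ^ 4 * f t x
      + (1 : ℂ) * (χ₂ t : ℂ) ^ 2 * ((deriv χ₁ t : ℝ) : ℂ) ^ 2 * (g₁ t : ℂ) * (x : ℂ) ^ 3 * f t x
      + (1 : ℂ) * (χ₂ t : ℂ) ^ 2 * ((deriv χ₁ t : ℝ) : ℂ) ^ 2 * (g₀ t : ℂ) * (x : ℂ) ^ 2 * f t x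
      + (-2 : ℂ) * (χ₁ t : ℂ) * (χ₂ t : ℂ) * (Cint χ₁ g₁ t : ℂ) * (Cint χ₂ g₁ t : ℂ) * (g₂ t : ℂ) * (x : ℂ) ^ 2 * f t x
      + (-2 : ℂ) * (χ₁ t : ℂ) * (χ₂ t : ℂ) * (Cint χ₁ g₁ t : ℂ) * (Cint χ₂ g₁ t : ℂ) * (g₁ t : ℂ) * (x : ℂ) * f t x
      + (-2 : ℂ) * (χ₁ t : ℂ) * (χ₂ t : ℂ) * (Cint χ₁ g₁ t : ℂ) * (Cint χ₂ g₁ t : ℂ) * (g₀ t : ℂ) * f t x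
      + (2 : ℂ) * (χ₁ t : ℂ) * (χ₂ t : ℂ) * ((deriv χ₂ t : ℝ) : ℂ) * (Cint χ₁ g₁ t : ℂ) * (g₂ t : ℂ) * (x : ℂ) ^ 3 * f t x
      + (2 : ℂ) * (χ₁ t : ℂ) * (χ₂ t : ℂ) * ((deriv χ₂ t : ℝ) : ℂ) * (Cint χ₁ g₁ t : ℂ) * (g₁ t : ℂ) * (x : ℂ) ^ 2 * f t x
      + (2 : ℂ) * (χ₁ t : ℂ) * (χ₂ t : ℂ) * ((deriv χ₂ t : ℝ) : ℂ) * (Cint χ₁ g₁ t : ℂ) * (g₀ t : ℂ) * (x : ℂ) * f t x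
      + (2 : ℂ) * (χ₁ t : ℂ) * (χ₂ t : ℂ) * ((deriv χ₁ t : ℝ) : ℂ) * (Cint χ₂ g₁ t : ℂ) * (g₂ t : ℂ) * (x : ℂ) ^ 3 * f t x
      + (2 : ℂ) * (χ₁ t : ℂ) * (χ₂ t : ℂ) * ((deriv χ₁ t : ℝ) : ℂ) * (Cint χ₂ g₁ t : ℂ) * (g₁ t : ℂ) * (x : ℂ) ^ 2 * f t x
      + (2 : ℂ) * (χ₁ t : ℂ) * (χ₂ t : ℂ) * ((deriv χ₁ t : ℝ) : ℂ) * (Cint χ₂ g₁ t : ℂ) * (g₀ t : ℂ) * (x : ℂ) * f t x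
      + (-2 : ℂ) * (χ₁ t : ℂ) * (χ₂ t : ℂ) * ((deriv χ₁ t : ℝ) : ℂ) * ((deriv χ₂ t : ℝ) : ℂ) * (g₂ t : ℂ) * (x : ℂ) ^ 4 * f t x
      + (-2 : ℂ) * (χ₁ t : ℂ) * (χ₂ t : ℂ) * ((deriv χ₁ t : ℝ) : ℂ) * ((deriv χ₂ t : ℝ) : ℂ) * (g₁ t : ℂ) * (x : ℂ) ^ 3 * f t x
      + (-2 : ℂ) * (χ₁ t : ℂ) * (χ₂ t : ℂ) * ((deriv χ₁ t : ℝ) : ℂ) * ((deriv χ₂ t : ℝ) : ℂ) * (g₀ t : ℂ) * (x : ℂ) ^ 2 * f t x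
      + (1 : ℂ) * (χ₁ t : ℂ) ^ 2 * (Cint χ₂ g₁ t : ℂ) ^ 2 * (g₂ t : ℂ) * (x : ℂ) ^ 2 * f t x
      + (1 : ℂ) * (χ₁ t : ℂ) ^ 2 * (Cint χ₂ g₁ t : ℂ) ^ 2 * (g₁ t : ℂ) * (x : ℂ) * f t x
      + (1 : ℂ) * (χ₁ t : ℂ) ^ 2 * (Cint χ₂ g₁ t : ℂ) ^ 2 * (g₀ t : ℂ) * f t x
      + (-2 : ℂ) * (χ₁ t : ℂ) ^ 2 * ((deriv χ₂ t : ℝ) : ℂ) * (Cint χ₂ g₁ t : ℂ) * (g₂ t : ℂ) * (x : ℂ) ^ 3 * f t x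
      + (-2 : ℂ) * (χ₁ t : ℂ) ^ 2 * ((deriv χ₂ t : ℝ) : ℂ) * (Cint χ₂ g₁ t : ℂ) * (g₁ t : ℂ) * (x : ℂ) ^ 2 * f t x
      + (-2 : ℂ) * (χ₁ t : ℂ) ^ 2 * ((deriv χ₂ t : ℝ) : ℂ) * (Cint χ₂ g₁ t : ℂ) * (g₀ t : ℂ) * (x : ℂ) * f t x
      + (1 : ℂ) * (χ₁ t : ℂ) ^ 2 * ((deriv χ₂ t : ℝ) : ℂ) ^ 2 * (g₂ t : ℂ) * (x : ℂ) ^ 4 * f t x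
      + (1 : ℂ) * (χ₁ t : ℂ) ^ 2 * ((deriv χ₂ t : ℝ) : ℂ) ^ 2 * (g₁ t : ℂ) * (x : ℂ) ^ 3 * f t x
      + (1 : ℂ) * (χ₁ t : ℂ) ^ 2 * ((deriv χ₂ t : ℝ) : ℂ) ^ 2 * (g₀ t : ℂ) * (x : ℂ) ^ 2 * f t x) * hII
end

section
/- Let λ, m ∈ ℝ. Suppose G : ℝ → ℂ is smooth, not identically zero, and satisfies y² G''(y) = (2λ − m y² + y⁴) G(y) for all y ∈ ℝ. Then there exists a nonnegative integer l with λ = l(l−1)/2 (equivalently, 1 + 8λ is the square of an odd positive integer). -/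
open scoped ContDiff


private lemma diff_iter {f : ℝ → ℂ} (hf : ContDiff ℝ ∞ f) (k : ℕ) :
    Differentiable ℝ (iteratedDeriv k f) :=
  hf.differentiable_iteratedDeriv k (by exact_mod_cast (WithTop.coe_lt_top k : (k:ℕ∞) < ⊤))

private lemma contDiff_iter {f : ℝ → ℂ} (hf : ContDiff ℝ ∞ f) (k : ℕ) :
    ContDiff ℝ ∞ (iteratedDeriv k f) := by
  rw [iteratedDeriv_eq_iterate]; exact hf.iterate_deriv k

private lemma ofReal_mul_iteratedDeriv (f : ℝ → ℂ) (hf : ContDiff ℝ ∞ f) :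
    ∀ (n : ℕ) (y : ℝ), iteratedDeriv n (fun x : ℝ => (x : ℂ) * f x) y
      = (y : ℂ) * iteratedDeriv n f y + (n : ℂ) * iteratedDeriv (n - 1) f y := by
  intro n
  induction n with
  | zero => intro y; simp
  | succ n ih =>
    intro y
    rw [iteratedDeriv_succ, funext ih]
    have hx : HasDerivAt (fun x : ℝ => (x : ℂ)) 1 y := by
      exact (hasDerivAt_id y).ofReal_comp
    have h1 : HasDerivAt (fun x : ℝ => (x : ℂ) * iteratedDeriv n f x)
        (1 * iteratedDeriv n f y + (y : ℂ) * iteratedDeriv (n + 1) f y) y := by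
      have hd := ((diff_iter hf n) y).hasDerivAt
      rw [← iteratedDeriv_succ] at hd
      exact hx.mul hd
    have h2 : HasDerivAt (fun x : ℝ => (n : ℂ) * iteratedDeriv (n - 1) f x)
        ((n : ℂ) * deriv (iteratedDeriv (n - 1) f) y) y :=
      (((diff_iter hf (n - 1)) y).hasDerivAt).const_mul _
    rw [HasDerivAt.deriv (f := fun x : ℝ => (x : ℂ) * iteratedDeriv n f x + (n : ℂ) * iteratedDeriv (n - 1) f x) (h1.add h2)]
    cases n with
    | zero => simp; ring
    | succ k =>
      have : deriv (iteratedDeriv (k + 1 - 1) f) y = iteratedDeriv (k + 1) f y := by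
        simp [← iteratedDeriv_succ]
      rw [this]
      push_cast
      ring


private lemma contDiff_xmul {f : ℝ → ℂ} (hf : ContDiff ℝ ∞ f) :
    ContDiff ℝ ∞ (fun x : ℝ => (x : ℂ) * f x) :=
  (Complex.ofRealCLM.contDiff.of_le le_top).mul hf

private lemma xmul_zero_eval (f : ℝ → ℂ) (hf : ContDiff ℝ ∞ f) (n : ℕ) :
    iteratedDeriv n (fun x : ℝ => (x : ℂ) * f x) 0
      = (n : ℂ) * iteratedDeriv (n - 1) f 0 := by
  rw [ofReal_mul_iteratedDeriv f hf n 0]; simp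

private lemma xmul2_zero_eval (f : ℝ → ℂ) (hf : ContDiff ℝ ∞ f) (n : ℕ) :
    iteratedDeriv n (fun x : ℝ => (x : ℂ) * ((x : ℂ) * f x)) 0
      = (n : ℂ) * ((n - 1 : ℕ) : ℂ) * iteratedDeriv (n - 2) f 0 := by
  rw [xmul_zero_eval _ (contDiff_xmul hf) n, xmul_zero_eval f hf (n - 1)]
  rw [show n - 1 - 1 = n - 2 from rfl]
  ring

private lemma xmul4_zero_eval (f : ℝ → ℂ) (hf : ContDiff ℝ ∞ f) (n : ℕ) :
    iteratedDeriv n (fun x : ℝ => (x : ℂ) * ((x : ℂ) * ((x : ℂ) * ((x : ℂ) * f x)))) 0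
      = (n : ℂ) * ((n - 1 : ℕ) : ℂ) * ((n - 2 : ℕ) : ℂ) * ((n - 3 : ℕ) : ℂ)
        * iteratedDeriv (n - 4) f 0 := by
  rw [xmul_zero_eval _ (contDiff_xmul (contDiff_xmul (contDiff_xmul hf))) n,
    xmul_zero_eval _ (contDiff_xmul (contDiff_xmul hf)) (n-1),
    xmul_zero_eval _ (contDiff_xmul hf) (n-1-1),
    xmul_zero_eval f hf (n-1-1-1)]
  rw [show n - 1 - 1 = n - 2 from rfl, show n - 2 - 1 = n - 3 from rfl,
    show n - 3 - 1 = n - 4 from rfl]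
  ring

private lemma iteratedDeriv_add' (f g : ℝ → ℂ) (hf : ContDiff ℝ ∞ f) (hg : ContDiff ℝ ∞ g)
    (n : ℕ) (y : ℝ) :
    iteratedDeriv n (fun x => f x + g x) y = iteratedDeriv n f y + iteratedDeriv n g y := by
  have := iteratedDerivWithin_add (Set.mem_univ y) uniqueDiffOn_univ
    ((hf.of_le (by exact_mod_cast le_top)) : ContDiff ℝ n f).contDiffWithinAt
    ((hg.of_le (by exact_mod_cast le_top)) : ContDiff ℝ n g).contDiffWithinAt
  simpa [iteratedDerivWithin_univ, Pi.add_def] using this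

private lemma iteratedDeriv_cmul (f : ℝ → ℂ) (c : ℂ) (hf : ContDiff ℝ ∞ f) (n : ℕ) (y : ℝ) :
    iteratedDeriv n (fun x => c * f x) y = c * iteratedDeriv n f y := by
  have := iteratedDerivWithin_const_smul (Set.mem_univ y) uniqueDiffOn_univ c
    ((hf.of_le (by exact_mod_cast le_top)) : ContDiff ℝ n f).contDiffWithinAt
  simpa [iteratedDerivWithin_univ, smul_eq_mul] using this

/-- the Taylor recurrence at 0 -/
private lemma taylor_rec (lam m : ℝ) (G : ℝ → ℂ) (hG : ContDiff ℝ ∞ G)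
    (hode : ∀ y : ℝ, (y : ℂ) ^ 2 * deriv (deriv G) y
      = (2 * (lam : ℂ) - (m : ℂ) * (y : ℂ) ^ 2 + (y : ℂ) ^ 4) * G y) (n : ℕ) :
    (n : ℂ) * ((n - 1 : ℕ) : ℂ) * iteratedDeriv (n - 2) (deriv (deriv G)) 0
      = 2 * (lam : ℂ) * iteratedDeriv n G 0
        - (m : ℂ) * ((n : ℂ) * ((n - 1 : ℕ) : ℂ)) * iteratedDeriv (n - 2) G 0
        + (n : ℂ) * ((n - 1 : ℕ) : ℂ) * ((n - 2 : ℕ) : ℂ) * ((n - 3 : ℕ) : ℂ)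
          * iteratedDeriv (n - 4) G 0 := by
  have hG' : ContDiff ℝ ∞ (deriv G) := (contDiff_infty_iff_deriv.mp hG).2
  have hW : ContDiff ℝ ∞ (deriv (deriv G)) := (contDiff_infty_iff_deriv.mp hG').2
  have hfun : (fun x : ℝ => (x : ℂ) * ((x : ℂ) * deriv (deriv G) x))
      = fun x : ℝ => 2 * (lam : ℂ) * G x
        + ((-(m : ℂ)) * ((x : ℂ) * ((x : ℂ) * G x))
          + (x : ℂ) * ((x : ℂ) * ((x : ℂ) * ((x : ℂ) * G x)))) := by
    funext x
    linear_combination hode x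
  have hs2 : ContDiff ℝ ∞ (fun x : ℝ => (x : ℂ) * ((x : ℂ) * G x)) :=
    contDiff_xmul (contDiff_xmul hG)
  have hs2m : ContDiff ℝ ∞ (fun x : ℝ => (-(m : ℂ)) * ((x : ℂ) * ((x : ℂ) * G x))) :=
    contDiff_const.mul hs2
  have hs4 : ContDiff ℝ ∞
      (fun x : ℝ => (x : ℂ) * ((x : ℂ) * ((x : ℂ) * ((x : ℂ) * G x)))) :=
    contDiff_xmul (contDiff_xmul hs2)
  have hs1 : ContDiff ℝ ∞ (fun x : ℝ => 2 * (lam : ℂ) * G x) := contDiff_const.mul hG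
  have h := congrArg (fun F => iteratedDeriv n F 0) hfun
  rw [xmul2_zero_eval _ hW n, iteratedDeriv_add' _ _ hs1 (hs2m.add hs4),
    iteratedDeriv_add' _ _ hs2m hs4, iteratedDeriv_cmul G (2 * (lam : ℂ)) hG,
    iteratedDeriv_cmul _ (-(m : ℂ)) hs2, xmul2_zero_eval G hG, xmul4_zero_eval G hG] at h
  rw [h]; ring


private lemma partA (lam m : ℝ) (G : ℝ → ℂ) (hG : ContDiff ℝ ∞ G)
    (hode : ∀ y : ℝ, (y : ℂ) ^ 2 * deriv (deriv G) y
      = (2 * (lam : ℂ) - (m : ℂ) * (y : ℂ) ^ 2 + (y : ℂ) ^ 4) * G y)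
    (h : ∃ n, iteratedDeriv n G 0 ≠ 0) :
    ∃ l : ℕ, lam = (l : ℝ) * ((l : ℝ) - 1) / 2 := by
  classical
  set k := Nat.find h with hkdef
  have hk : iteratedDeriv k G 0 ≠ 0 := Nat.find_spec h
  have hmin : ∀ j < k, iteratedDeriv j G 0 = 0 := by
    intro j hj
    by_contra hne
    exact absurd hj (not_lt.mpr (Nat.find_le hne))
  clear_value k
  have htr := taylor_rec lam m G hG hode k
  rcases Nat.lt_or_ge k 2 with hk2 | hk2
  · -- k = 0 or 1 : lam = 0
    refine ⟨0, ?_⟩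
    have hcoef : ((k - 1 : ℕ) : ℂ) * (k : ℂ) = 0 := by
      interval_cases k <;> simp
    have h2 : 2 * (lam : ℂ) * iteratedDeriv k G 0 = 0 := by
      linear_combination -htr + (iteratedDeriv (k-2) (deriv (deriv G)) 0
          + (m:ℂ) * iteratedDeriv (k-2) G 0
          - ((k - 2 : ℕ) : ℂ) * ((k - 3 : ℕ) : ℂ) * iteratedDeriv (k-4) G 0) * hcoef
    have : (lam : ℂ) = 0 := by
      rcases mul_eq_zero.mp h2 with h' | h'
      · rcases mul_eq_zero.mp h' with h'' | h''
        · norm_num at h''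
        · exact h''
      · exact absurd h' hk
    have : lam = 0 := by exact_mod_cast this
    simp [this]
  · -- k ≥ 2
    obtain ⟨j, rfl⟩ : ∃ j, k = j + 2 := ⟨k - 2, by omega⟩
    have hWk : iteratedDeriv (j + 2 - 2) (deriv (deriv G)) 0 = iteratedDeriv (j + 2) G 0 := by
      have e1 : iteratedDeriv (j + 2) G = iteratedDeriv (j + 1) (deriv G) := by
        rw [iteratedDeriv_succ']
      have e2 : iteratedDeriv (j + 1) (deriv G) = iteratedDeriv j (deriv (deriv G)) := by
        rw [iteratedDeriv_succ']
      simp [e1, e2]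
    have hz2 : iteratedDeriv (j + 2 - 2) G 0 = 0 := hmin _ (by omega)
    have hz4 : iteratedDeriv (j + 2 - 4) G 0 = 0 := hmin _ (by omega)
    rw [hWk, hz2, hz4] at htr
    have hcoef : ((j + 2 : ℕ) : ℂ) * ((j + 2 - 1 : ℕ) : ℂ) = 2 * (lam : ℂ) := by
      have := mul_right_cancel₀ hk (by linear_combination htr :
        ((j + 2 : ℕ) : ℂ) * ((j + 2 - 1 : ℕ) : ℂ) * iteratedDeriv (j + 2) G 0
          = 2 * (lam : ℂ) * iteratedDeriv (j + 2) G 0)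
      exact this
    refine ⟨j + 2, ?_⟩
    simp only [show j + 2 - 1 = j + 1 from rfl] at hcoef
    have hre : ((j : ℝ) + 2) * ((j : ℝ) + 1) = 2 * lam := by
      push_cast at hcoef
      exact_mod_cast hcoef
    push_cast
    linarith



private lemma flat_bound (n : ℕ) :
    ∀ (f : ℝ → ℂ), ContDiff ℝ ∞ f → (∀ j, iteratedDeriv j f 0 = 0) →
    ∀ δ : ℝ, 0 < δ → ∃ K : ℝ, 0 ≤ K ∧ ∀ y ∈ Set.Icc (0:ℝ) δ, ‖f y‖ ≤ K * y ^ n := by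
  induction n with
  | zero =>
    intro f hf _ δ hδ
    obtain ⟨K, hK⟩ := (isCompact_Icc (a := (0:ℝ)) (b := δ)).exists_bound_of_continuousOn
      (hf.continuous.continuousOn.norm)
    refine ⟨max K 0, le_max_right _ _, fun y hy => ?_⟩
    have := hK y hy; simp only [norm_norm] at this; rw [pow_zero, mul_one]; exact this.trans (le_max_left _ _)
  | succ n ih =>
    intro f hf hflat δ hδ
    have hf' : ContDiff ℝ ∞ (deriv f) := (contDiff_infty_iff_deriv.mp hf).2
    have hflat' : ∀ j, iteratedDeriv j (deriv f) 0 = 0 := by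
      intro j
      have := hflat (j + 1)
      rwa [iteratedDeriv_succ'] at this
    obtain ⟨K, hK0, hK⟩ := ih (deriv f) hf' hflat' δ hδ
    refine ⟨K, hK0, fun y hy => ?_⟩
    have hy0 : 0 ≤ y := hy.1
    have hftc : ∫ t in (0:ℝ)..y, deriv f t = f y - f 0 := by
      apply intervalIntegral.integral_deriv_eq_sub
      · exact fun t _ => (hf.differentiable (by simp)).differentiableAt
      · exact (hf'.continuous.intervalIntegrable _ _)
    have hf0 : f 0 = 0 := by simpa using hflat 0
    have hnorm : ‖f y‖ ≤ ∫ t in (0:ℝ)..y, K * t ^ n := by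
      rw [show f y = ∫ t in (0:ℝ)..y, deriv f t by rw [hftc, hf0, sub_zero]]
      calc ‖∫ t in (0:ℝ)..y, deriv f t‖ ≤ ∫ t in (0:ℝ)..y, ‖deriv f t‖ :=
            intervalIntegral.norm_integral_le_integral_norm hy0
        _ ≤ ∫ t in (0:ℝ)..y, K * t ^ n := by
            apply intervalIntegral.integral_mono_on hy0
            · exact (hf'.continuous.norm.intervalIntegrable _ _)
            · exact ((continuous_const.mul (continuous_pow n)).intervalIntegrable _ _)
            · intro t ht
              exact hK t ⟨ht.1, ht.2.trans hy.2⟩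
    have hint : ∫ t in (0:ℝ)..y, K * t ^ n = K * (y ^ (n+1) / (n+1)) := by
      rw [intervalIntegral.integral_const_mul, integral_pow]
      ring
    rw [hint] at hnorm
    refine hnorm.trans ?_
    have h1 : y ^ (n+1) / (n+1) ≤ y ^ (n+1) := by
      apply div_le_self (pow_nonneg hy0 _)
      exact_mod_cast Nat.le_add_left 1 n
    nlinarith [pow_nonneg hy0 (n+1)]

-- derivative of the energy
private lemma energy_deriv (G : ℝ → ℂ) (hG : ContDiff ℝ ∞ G) (y : ℝ) :
    HasDerivAt (fun t => Complex.normSq (G t) + t ^ 2 * Complex.normSq (deriv G t))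
      ((2 * (G y).re * (deriv G y).re + 2 * (G y).im * (deriv G y).im)
        + (2 * y * Complex.normSq (deriv G y)
          + y ^ 2 * (2 * (deriv G y).re * (deriv (deriv G) y).re
            + 2 * (deriv G y).im * (deriv (deriv G) y).im))) y := by
  have hv : ContDiff ℝ ∞ (deriv G) := (contDiff_infty_iff_deriv.mp hG).2
  have hdG : HasDerivAt G (deriv G y) y :=
    ((hG.differentiable (by simp)) y).hasDerivAt
  have hdv : HasDerivAt (deriv G) (deriv (deriv G) y) y :=
    ((hv.differentiable (by simp)) y).hasDerivAt
  have hGre : HasDerivAt (fun t => (G t).re) ((deriv G y).re) y := by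
    exact Complex.reCLM.hasFDerivAt.comp_hasDerivAt y hdG
  have hGim : HasDerivAt (fun t => (G t).im) ((deriv G y).im) y := by
    exact Complex.imCLM.hasFDerivAt.comp_hasDerivAt y hdG
  have hvre : HasDerivAt (fun t => (deriv G t).re) ((deriv (deriv G) y).re) y := by
    exact Complex.reCLM.hasFDerivAt.comp_hasDerivAt y hdv
  have hvim : HasDerivAt (fun t => (deriv G t).im) ((deriv (deriv G) y).im) y := by
    exact Complex.imCLM.hasFDerivAt.comp_hasDerivAt y hdv
  have h1 : HasDerivAt (fun t => Complex.normSq (G t))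
      (2 * (G y).re * (deriv G y).re + 2 * (G y).im * (deriv G y).im) y := by
    have : (fun t => Complex.normSq (G t))
        = fun t => (G t).re * (G t).re + (G t).im * (G t).im := by
      funext t; rw [Complex.normSq_apply]
    rw [this]
    have := (hGre.mul hGre).add (hGim.mul hGim)
    exact this.congr_deriv (by ring)
  have h2v : HasDerivAt (fun t => Complex.normSq (deriv G t))
      (2 * (deriv G y).re * (deriv (deriv G) y).re
        + 2 * (deriv G y).im * (deriv (deriv G) y).im) y := by
    have : (fun t => Complex.normSq (deriv G t))
        = fun t => (deriv G t).re * (deriv G t).re + (deriv G t).im * (deriv G t).im := by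
      funext t; rw [Complex.normSq_apply]
    rw [this]
    have := (hvre.mul hvre).add (hvim.mul hvim)
    exact this.congr_deriv (by ring)
  have h2 : HasDerivAt (fun t => t ^ 2 * Complex.normSq (deriv G t))
      (2 * y * Complex.normSq (deriv G y)
        + y ^ 2 * (2 * (deriv G y).re * (deriv (deriv G) y).re
          + 2 * (deriv G y).im * (deriv (deriv G) y).im)) y := by
    have := (hasDerivAt_pow 2 y).mul h2v
    exact this.congr_deriv (by ring)
  exact h1.add h2


private noncomputable def EE (G : ℝ → ℂ) (t : ℝ) : ℝ :=
  Complex.normSq (G t) + t ^ 2 * Complex.normSq (deriv G t)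

private noncomputable def ee' (G : ℝ → ℂ) (y : ℝ) : ℝ :=
  (2 * (G y).re * (deriv G y).re + 2 * (G y).im * (deriv G y).im)
    + (2 * y * Complex.normSq (deriv G y)
      + y ^ 2 * (2 * (deriv G y).re * (deriv (deriv G) y).re
        + 2 * (deriv G y).im * (deriv (deriv G) y).im))

private lemma hasDerivAt_EE (G : ℝ → ℂ) (hG : ContDiff ℝ ∞ G) (y : ℝ) :
    HasDerivAt (EE G) (ee' G y) y := energy_deriv G hG y

private lemma alg_key (y a b c d wr wi qv Q Nr : ℝ) (hy : 0 < y)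
    (hwr : y ^ 2 * wr = qv * a) (hwi : y ^ 2 * wi = qv * b)
    (hql : -Q ≤ qv) (hqu : qv ≤ Q) (hN : 3 + Q ≤ Nr) :
    y * ((2 * a * c + 2 * b * d)
        + (2 * y * (c ^ 2 + d ^ 2) + y ^ 2 * (2 * c * wr + 2 * d * wi)))
      ≤ Nr * ((a ^ 2 + b ^ 2) + y ^ 2 * (c ^ 2 + d ^ 2)) := by
  have hEy : (0:ℝ) ≤ (a ^ 2 + b ^ 2) + y ^ 2 * (c ^ 2 + d ^ 2) := by positivity
  have hexp : y * ((2 * a * c + 2 * b * d)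
        + (2 * y * (c ^ 2 + d ^ 2) + y ^ 2 * (2 * c * wr + 2 * d * wi)))
      = (2 * y * (a * c + b * d)) + 2 * y ^ 2 * (c ^ 2 + d ^ 2)
        + qv * (2 * y * (a * c + b * d)) := by
    linear_combination (2 * y * c) * hwr + (2 * y * d) * hwi
  rw [hexp]
  have hs_le : 2 * y * (a * c + b * d) ≤ (a ^ 2 + b ^ 2) + y ^ 2 * (c ^ 2 + d ^ 2) := by
    nlinarith [sq_nonneg (a - y * c), sq_nonneg (b - y * d)]
  have hs_ge : -((a ^ 2 + b ^ 2) + y ^ 2 * (c ^ 2 + d ^ 2)) ≤ 2 * y * (a * c + b * d) := by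
    nlinarith [sq_nonneg (a + y * c), sq_nonneg (b + y * d)]
  have hqs : qv * (2 * y * (a * c + b * d))
      ≤ Q * ((a ^ 2 + b ^ 2) + y ^ 2 * (c ^ 2 + d ^ 2)) := by
    nlinarith [mul_nonneg (sub_nonneg.2 hqu) (by linarith :
        (0:ℝ) ≤ ((a ^ 2 + b ^ 2) + y ^ 2 * (c ^ 2 + d ^ 2)) + 2 * y * (a * c + b * d)),
      mul_nonneg (by linarith : (0:ℝ) ≤ Q + qv) (by linarith :
        (0:ℝ) ≤ ((a ^ 2 + b ^ 2) + y ^ 2 * (c ^ 2 + d ^ 2)) - 2 * y * (a * c + b * d))]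
  have h2E : 2 * y ^ 2 * (c ^ 2 + d ^ 2)
      ≤ 2 * ((a ^ 2 + b ^ 2) + y ^ 2 * (c ^ 2 + d ^ 2)) := by nlinarith [sq_nonneg a, sq_nonneg b]
  nlinarith [mul_le_mul_of_nonneg_right hN hEy]

private lemma ode_flat_zero (lam m : ℝ) (G : ℝ → ℂ) (hG : ContDiff ℝ ∞ G)
    (hode : ∀ y : ℝ, (y : ℂ) ^ 2 * deriv (deriv G) y
      = (2 * (lam : ℂ) - (m : ℂ) * (y : ℂ) ^ 2 + (y : ℂ) ^ 4) * G y)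
    (hflat : ∀ n, iteratedDeriv n G 0 = 0) (y0 : ℝ) (hy0 : 0 < y0) : G y0 = 0 := by
  have hv : ContDiff ℝ ∞ (deriv G) := (contDiff_infty_iff_deriv.mp hG).2
  have hqre : ∀ y : ℝ, y ^ 2 * (deriv (deriv G) y).re
      = (2 * lam - m * y ^ 2 + y ^ 4) * (G y).re := by
    intro y
    have hc : ((y ^ 2 : ℝ) : ℂ) * deriv (deriv G) y
        = ((2 * lam - m * y ^ 2 + y ^ 4 : ℝ) : ℂ) * G y := by
      push_cast; linear_combination hode y
    simpa only [Complex.re_ofReal_mul] using congrArg Complex.re hc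
  have hqim : ∀ y : ℝ, y ^ 2 * (deriv (deriv G) y).im
      = (2 * lam - m * y ^ 2 + y ^ 4) * (G y).im := by
    intro y
    have hc : ((y ^ 2 : ℝ) : ℂ) * deriv (deriv G) y
        = ((2 * lam - m * y ^ 2 + y ^ 4 : ℝ) : ℂ) * G y := by
      push_cast; linear_combination hode y
    simpa only [Complex.im_ofReal_mul] using congrArg Complex.im hc
  obtain ⟨Q, hQ0, hQb⟩ : ∃ Q : ℝ, 0 ≤ Q ∧ ∀ y ∈ Set.Icc (0:ℝ) y0,
      -Q ≤ 2 * lam - m * y ^ 2 + y ^ 4 ∧ 2 * lam - m * y ^ 2 + y ^ 4 ≤ Q := by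
    refine ⟨2 * |lam| + |m| * y0 ^ 2 + y0 ^ 4, by positivity, fun y hy => ?_⟩
    have h2 : y ^ 2 ≤ y0 ^ 2 := pow_le_pow_left₀ hy.1 hy.2 2
    have h4 : y ^ 4 ≤ y0 ^ 4 := pow_le_pow_left₀ hy.1 hy.2 4
    have hm2 : |m| * y ^ 2 ≤ |m| * y0 ^ 2 := mul_le_mul_of_nonneg_left h2 (abs_nonneg m)
    constructor
    · linarith [le_abs_self lam, neg_abs_le lam,
        mul_le_mul_of_nonneg_right (le_abs_self m) (sq_nonneg y), hm2,
        pow_nonneg hy.1 4, pow_nonneg hy0.le 4]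
    · linarith [le_abs_self lam, neg_abs_le lam,
        mul_le_mul_of_nonneg_right (neg_abs_le m) (sq_nonneg y), hm2, h4]
  obtain ⟨N, hN⟩ : ∃ N : ℕ, 3 + Q ≤ (N : ℝ) := ⟨⌈3 + Q⌉₊, Nat.le_ceil _⟩
  have hN1 : 1 ≤ N := by
    by_contra h
    interval_cases N <;> simp_all <;> linarith
  -- key inequality
  have hkey : ∀ y, 0 < y → y ≤ y0 → y * ee' G y ≤ (N : ℝ) * EE G y := by
    intro y hy hyle
    obtain ⟨hql, hqu⟩ := hQb y ⟨hy.le, hyle⟩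
    have := alg_key y (G y).re (G y).im (deriv G y).re (deriv G y).im
      (deriv (deriv G) y).re (deriv (deriv G) y).im (2 * lam - m * y ^ 2 + y ^ 4) Q N hy
      (hqre y) (hqim y) hql hqu hN
    simpa only [EE, ee', Complex.normSq_apply, ← sq] using this
  -- antitone of E y / y^N on [ε, y0]
  have hmono : ∀ ε : ℝ, 0 < ε → ε ≤ y0 → EE G y0 / y0 ^ N ≤ EE G ε / ε ^ N := by
    intro ε hε hεle
    have hcont : ContinuousOn (fun y => EE G y / y ^ N) (Set.Icc ε y0) := by
      apply ContinuousOn.div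
      · exact ((Complex.continuous_normSq.comp hG.continuous).add
          ((continuous_pow 2).mul (Complex.continuous_normSq.comp hv.continuous))).continuousOn
      · exact (continuous_pow N).continuousOn
      · exact fun x hx => pow_ne_zero _ (lt_of_lt_of_le hε hx.1).ne'
    have hderiv : ∀ x ∈ Set.Ioo ε y0,
        HasDerivAt (fun y => EE G y / y ^ N)
          ((ee' G x * x ^ N - EE G x * ((N : ℝ) * x ^ (N - 1))) / (x ^ N) ^ 2) x := by
      intro x hx
      exact (hasDerivAt_EE G hG x).div (hasDerivAt_pow N x)
        (pow_ne_zero _ (lt_of_lt_of_le hε hx.1.le).ne')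
    have hanti : AntitoneOn (fun y => EE G y / y ^ N) (Set.Icc ε y0) := by
      apply antitoneOn_of_deriv_nonpos (convex_Icc ε y0) hcont
      · intro x hx
        rw [interior_Icc] at hx
        exact ((hderiv x hx).differentiableAt).differentiableWithinAt
      · intro x hx
        rw [interior_Icc] at hx
        rw [(hderiv x hx).deriv]
        apply div_nonpos_of_nonpos_of_nonneg _ (sq_nonneg _)
        have hx0 : 0 < x := lt_of_lt_of_le hε hx.1.le
        have h1 : x * ee' G x ≤ (N : ℝ) * EE G x := hkey x hx0 hx.2.le
        have hxN : x ^ N = x ^ (N - 1) * x := by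
          conv_lhs => rw [show N = N - 1 + 1 by omega]
          rw [pow_succ]
        rw [hxN]
        have h2 := mul_le_mul_of_nonneg_right h1 (pow_nonneg hx0.le (N - 1))
        nlinarith [h2]
    exact hanti ⟨le_rfl, hεle⟩ ⟨hεle, le_rfl⟩ hεle
  -- flat bounds
  have hflatv : ∀ j, iteratedDeriv j (deriv G) 0 = 0 := by
    intro j; have := hflat (j + 1); rwa [iteratedDeriv_succ'] at this
  obtain ⟨K, hK0, hKb⟩ := flat_bound (N + 1) G hG hflat y0 hy0
  obtain ⟨K', hK'0, hK'b⟩ := flat_bound N (deriv G) hv hflatv y0 hy0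
  set M : ℝ := K ^ 2 + K' ^ 2 with hMdef
  have hM0 : 0 ≤ M := by positivity
  have hEbound : ∀ ε : ℝ, 0 < ε → ε ≤ 1 → ε ≤ y0 → EE G ε / ε ^ N ≤ M * ε := by
    intro ε hε hε1 hεle
    have hG1 : ‖G ε‖ ≤ K * ε ^ (N + 1) := hKb ε ⟨hε.le, hεle⟩
    have hv1 : ‖deriv G ε‖ ≤ K' * ε ^ N := hK'b ε ⟨hε.le, hεle⟩
    have hnsG : Complex.normSq (G ε) ≤ (K * ε ^ (N + 1)) ^ 2 := by
      rw [Complex.normSq_eq_norm_sq]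
      apply pow_le_pow_left₀ (norm_nonneg _)
      assumption
    have hnsv : Complex.normSq (deriv G ε) ≤ (K' * ε ^ N) ^ 2 := by
      rw [Complex.normSq_eq_norm_sq]
      apply pow_le_pow_left₀ (norm_nonneg _)
      assumption
    have hEε : EE G ε ≤ M * ε ^ (2 * N + 2) := by
      have : EE G ε ≤ (K * ε ^ (N + 1)) ^ 2 + ε ^ 2 * (K' * ε ^ N) ^ 2 := by
        unfold EE
        have := mul_le_mul_of_nonneg_left hnsv (sq_nonneg ε)
        linarith
      refine this.trans (le_of_eq ?_)
      ring
    have hth : EE G ε ≤ (M * ε) * ε ^ N := by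
      refine hEε.trans ?_
      have h1 : ε ^ (2 * N + 2) ≤ ε ^ (N + 1) :=
        pow_le_pow_of_le_one hε.le hε1 (by omega)
      have h2 : ε ^ (N + 1) = ε * ε ^ N := by rw [pow_succ]; ring
      calc M * ε ^ (2 * N + 2) ≤ M * ε ^ (N + 1) := mul_le_mul_of_nonneg_left h1 hM0
        _ = (M * ε) * ε ^ N := by rw [h2]; ring
    rw [div_le_iff₀ (pow_pos hε N)]
    exact hth
  -- conclusion
  have ht0 : EE G y0 / y0 ^ N ≤ 0 := by
    by_contra h
    push_neg at h
    set t := EE G y0 / y0 ^ N with htdef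
    set ε := min (min 1 y0) (t / (2 * (M + 1))) with hεdef
    have hεpos : 0 < ε := by
      apply lt_min (lt_min one_pos hy0)
      positivity
    have hε1 : ε ≤ 1 := (min_le_left _ _).trans (min_le_left _ _)
    have hεy0 : ε ≤ y0 := (min_le_left _ _).trans (min_le_right _ _)
    have h1 : t ≤ M * ε := (hmono ε hεpos hεy0).trans (hEbound ε hεpos hε1 hεy0)
    have h2 : M * ε ≤ (M + 1) * ε := by nlinarith
    have h3 : (M + 1) * ε ≤ (M + 1) * (t / (2 * (M + 1))) :=
      mul_le_mul_of_nonneg_left (min_le_right _ _) (by linarith)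
    have h4 : (M + 1) * (t / (2 * (M + 1))) = t / 2 := by
      have hM1 : M + 1 ≠ 0 := by positivity
      field_simp
    have hfin : t ≤ t / 2 := h1.trans (h2.trans (h3.trans_eq h4))
    linarith
  have hEy0 : EE G y0 ≤ 0 := by
    rcases div_nonpos_iff.mp ht0 with h | h
    · exact absurd h.2 (pow_pos hy0 N).not_ge
    · exact h.1
  have hns : Complex.normSq (G y0) ≤ 0 := by
    have : 0 ≤ y0 ^ 2 * Complex.normSq (deriv G y0) :=
      mul_nonneg (by positivity) (Complex.normSq_nonneg _)
    unfold EE at hEy0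
    linarith
  have : Complex.normSq (G y0) = 0 := le_antisymm hns (Complex.normSq_nonneg _)
  exact Complex.normSq_eq_zero.mp this

/-- If a smooth, not identically zero `G : ℝ → ℂ` satisfies the radial ODE
`y²G'' = (2λ - my² + y⁴)G` on all of `ℝ`, then `λ = l(l-1)/2` for some
nonnegative integer `l`. -/
theorem eigenvalue_is_triangular (lam m : ℝ) (G : ℝ → ℂ)
    (hG : ContDiff ℝ (⊤ : ℕ∞) G) (hG0 : ∃ y : ℝ, G y ≠ 0)
    (hode : ∀ y : ℝ, (y : ℂ) ^ 2 * deriv (deriv G) y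
      = (2 * (lam : ℂ) - (m : ℂ) * (y : ℂ) ^ 2 + (y : ℂ) ^ 4) * G y) :
    ∃ l : ℕ, lam = (l : ℝ) * ((l : ℝ) - 1) / 2 := by
  have hGi : ContDiff ℝ ∞ G := hG.of_le (by simp)
  by_cases hex : ∃ n, iteratedDeriv n G 0 ≠ 0
  · exact partA lam m G hGi hode hex
  · push_neg at hex
    exfalso
    obtain ⟨y, hy⟩ := hG0
    rcases lt_trichotomy y 0 with h | h | h
    · -- negative side: use G (-t)
      have hH : ContDiff ℝ ∞ (fun t : ℝ => G (-t)) := hGi.comp contDiff_neg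
      have hd1 : deriv (fun t : ℝ => G (-t)) = fun t => -deriv G (-t) :=
        funext fun t => deriv_comp_neg G t
      have hd2 : ∀ t, deriv (deriv (fun t : ℝ => G (-t))) t = deriv (deriv G) (-t) := by
        intro t
        rw [hd1]
        have : deriv (fun t : ℝ => -deriv G (-t)) t = -deriv (fun t : ℝ => deriv G (-t)) t :=
          deriv.neg
        rw [this, deriv_comp_neg (deriv G) t, neg_neg]
      have hodeH : ∀ t : ℝ, (t : ℂ) ^ 2 * deriv (deriv (fun t : ℝ => G (-t))) t
          = (2 * (lam : ℂ) - (m : ℂ) * (t : ℂ) ^ 2 + (t : ℂ) ^ 4) * G (-t) := by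
        intro t
        rw [hd2]
        have := hode (-t)
        push_cast at this ⊢
        linear_combination this
      have hflatH : ∀ n, iteratedDeriv n (fun t : ℝ => G (-t)) 0 = 0 := by
        intro n
        rw [iteratedDeriv_comp_neg]
        simp [hex n]
      have := ode_flat_zero lam m (fun t : ℝ => G (-t)) hH hodeH hflatH (-y) (by linarith)
      simp only [neg_neg] at this
      exact hy this
    · apply hy
      have := hex 0
      simpa [h] using this
    · exact hy (ode_flat_zero lam m G hGi hode hex y h)
end

section
/- Let l be an integer with l ≥ 2, set λ = l(l−1)/2, and let m ∈ ℝ. Define ₁F₁(a; b; z) = Σ_{n=0}^∞ ((a)_n / (b)_n) zⁿ/n! (Pochhammer rising factorials; the series converges for all z ∈ ℂ since b = l + 1/2 > 0), and let G₀(y) = e^{−y²/2} y^l · ₁F₁( (1 + 2l − m)/4 ; l + 1/2 ; y² ). Then the set of smooth functions G : ℝ → ℂ satisfying y² G''(y) = (2λ − m y² + y⁴) G(y) for all y ∈ ℝ is exactly { c · G₀ : c ∈ ℂ }; in particular this solution space is a one-dimensional complex vector space. -/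
open scoped Topology
set_option maxHeartbeats 1000000

namespace CHG

noncomputable def coef (a b : ℂ) (n : ℕ) : ℂ :=
  (ascPochhammer ℂ n).eval a / ((ascPochhammer ℂ n).eval b * n.factorial)

noncomputable def F (a b : ℂ) (z : ℂ) : ℂ := ∑' n : ℕ, coef a b n * z ^ n

noncomputable def coefD (c : ℕ → ℂ) : ℕ → ℂ := fun n => ((n:ℂ)+1) * c (n+1)

noncomputable def F₁ (a b : ℂ) : ℂ → ℂ := fun z => ∑' n : ℕ, coefD (coef a b) n * z ^ n

noncomputable def F₂ (a b : ℂ) : ℂ → ℂ := fun z => ∑' n : ℕ, coefD (coefD (coef a b)) n * z ^ n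

variable {a b : ℂ}

lemma badd_ne_zero (hb : ∀ n : ℕ, ((n : ℝ) + 1) ≤ ‖b + n‖) (n : ℕ) : b + (n : ℂ) ≠ 0 := by
  intro h
  have h1 := hb n
  rw [h, norm_zero] at h1
  have : (0:ℝ) < (n:ℝ) + 1 := by positivity
  linarith

lemma poch_ne_zero (hb : ∀ n : ℕ, ((n : ℝ) + 1) ≤ ‖b + n‖) (n : ℕ) :
    (ascPochhammer ℂ n).eval b ≠ 0 := by
  induction n with
  | zero => simp
  | succ n ih =>
    rw [ascPochhammer_succ_eval]
    exact mul_ne_zero ih (badd_ne_zero hb n)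

lemma coef_rec (hb : ∀ n : ℕ, ((n : ℝ) + 1) ≤ ‖b + n‖) (n : ℕ) :
    ((n : ℂ) + 1) * (b + n) * coef a b (n + 1) = (a + n) * coef a b n := by
  have hbn := badd_ne_zero hb n
  have hpb := poch_ne_zero hb n
  have hfac' : ((n.factorial : ℂ)) ≠ 0 := Nat.cast_ne_zero.mpr (Nat.factorial_ne_zero _)
  have hn1 : ((n : ℂ) + 1) ≠ 0 := Nat.cast_add_one_ne_zero n
  simp only [coef, ascPochhammer_succ_eval, Nat.factorial_succ]
  push_cast
  field_simp

lemma norm_coef_rec (hb : ∀ n : ℕ, ((n : ℝ) + 1) ≤ ‖b + n‖) (n : ℕ) :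
    ((n : ℝ) + 1) * ‖b + (n:ℂ)‖ * ‖coef a b (n + 1)‖ = ‖a + (n:ℂ)‖ * ‖coef a b n‖ := by
  have h := congrArg norm (coef_rec (a := a) hb n)
  have h2 : ‖((n:ℂ)+1)‖ = (n:ℝ)+1 := by
    rw [show ((n:ℂ)+1) = ((n+1:ℕ):ℂ) by push_cast; ring, Complex.norm_natCast]
    push_cast
    ring
  simpa [norm_mul, h2] using h

lemma coef_summable (hb : ∀ n : ℕ, ((n : ℝ) + 1) ≤ ‖b + n‖) (r : ℝ) (hr : 0 ≤ r) :
    Summable (fun n : ℕ => ‖coef a b n‖ * r ^ n) := by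
  apply summable_of_ratio_norm_eventually_le (r := 1/2) (by norm_num)
  have h1 : ∀ᶠ n : ℕ in Filter.atTop, ‖a‖ ≤ (n : ℝ) :=
    (tendsto_natCast_atTop_atTop (R := ℝ)).eventually_ge_atTop ‖a‖
  have h2 : ∀ᶠ n : ℕ in Filter.atTop, 4 * r ≤ (n : ℝ) + 1 :=
    ((tendsto_natCast_atTop_atTop (R := ℝ)).atTop_add tendsto_const_nhds).eventually_ge_atTop (4*r)
  filter_upwards [h1, h2] with n ha4 hr4
  have key := norm_coef_rec (a := a) hb n
  have hbn : ((n : ℝ) + 1) ≤ ‖b + (n:ℂ)‖ := hb n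
  have han : ‖a + (n:ℂ)‖ ≤ ‖a‖ + n := by
    calc ‖a + (n:ℂ)‖ ≤ ‖a‖ + ‖(n:ℂ)‖ := norm_add_le _ _
    _ = ‖a‖ + n := by rw [Complex.norm_natCast]
  have hc1 : (0:ℝ) ≤ ‖coef a b (n+1)‖ := norm_nonneg _
  have hc0 : (0:ℝ) ≤ ‖coef a b n‖ := norm_nonneg _
  have hrn : (0:ℝ) ≤ r ^ n := pow_nonneg hr n
  have hpos : (0:ℝ) < ((n:ℝ)+1) := by positivity
  have hbpos : (0:ℝ) < ‖b + (n:ℂ)‖ := lt_of_lt_of_le hpos hbn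
  rw [Real.norm_eq_abs, Real.norm_eq_abs, abs_of_nonneg (by positivity),
    abs_of_nonneg (by positivity), pow_succ]
  have step : ‖a + (n:ℂ)‖ * r ≤ 1/2 * (((n:ℝ)+1) * ‖b + (n:ℂ)‖) := by
    have e1 : (‖a‖ + n) * r ≤ 1/2 * (((n:ℝ)+1) * ((n:ℝ)+1)) := by nlinarith
    have e2 : ‖a + (n:ℂ)‖ * r ≤ (‖a‖ + n) * r := mul_le_mul_of_nonneg_right han hr
    have e3 : 1/2 * (((n:ℝ)+1) * ((n:ℝ)+1)) ≤ 1/2 * (((n:ℝ)+1) * ‖b + (n:ℂ)‖) := by nlinarith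
    linarith
  rw [← mul_le_mul_iff_right₀ (mul_pos hpos hbpos)]
  calc ((n:ℝ)+1) * ‖b + (n:ℂ)‖ * (‖coef a b (n+1)‖ * (r^n * r))
      = (((n:ℝ)+1) * ‖b + (n:ℂ)‖ * ‖coef a b (n+1)‖) * (r^n * r) := by ring
    _ = (‖a + (n:ℂ)‖ * ‖coef a b n‖) * (r^n * r) := by rw [key]
    _ = (‖a + (n:ℂ)‖ * r) * (‖coef a b n‖ * r^n) := by ring
    _ ≤ (1/2 * (((n:ℝ)+1) * ‖b + (n:ℂ)‖)) * (‖coef a b n‖ * r^n) :=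
        mul_le_mul_of_nonneg_right step (by positivity)
    _ = ((n:ℝ)+1) * ‖b + (n:ℂ)‖ * (1/2 * (‖coef a b n‖ * r^n)) := by ring

lemma shift_summable (c : ℕ → ℂ) (hc : ∀ r : ℝ, 0 ≤ r → Summable fun n : ℕ => ‖c n‖ * r ^ n) :
    ∀ r : ℝ, 0 ≤ r → Summable fun n : ℕ => ‖((n:ℂ)+1) * c (n+1)‖ * r ^ n := by
  intro r hr
  set r' : ℝ := max r 1 with hr'def
  have hr1 : (1:ℝ) ≤ r' := le_max_right _ _
  have hrr : r ≤ r' := le_max_left _ _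
  have h0 : Summable (fun n : ℕ => ‖c n‖ * (2*r')^n) := hc _ (by positivity)
  have h1 : Summable (fun n : ℕ => ‖c (n+1)‖ * (2*r')^(n+1)) := by
    exact (summable_nat_add_iff 1).mpr h0
  refine h1.of_nonneg_of_le (fun n => by positivity) (fun n => ?_)
  have e1 : ‖((n:ℂ)+1) * c (n+1)‖ = ((n:ℝ)+1) * ‖c (n+1)‖ := by
    rw [norm_mul]
    congr 1
    rw [show ((n:ℂ)+1) = ((n+1:ℕ):ℂ) by push_cast; ring, Complex.norm_natCast]
    push_cast; ring
  rw [e1]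
  have e2 : ((n:ℝ)+1) ≤ 2^(n+1) := by
    have := Nat.lt_two_pow_self (n := n)
    have h2 : ((n:ℝ)+1) ≤ (2:ℝ)^n := by exact_mod_cast Nat.succ_le_of_lt this
    calc ((n:ℝ)+1) ≤ (2:ℝ)^n := h2
      _ ≤ (2:ℝ)^(n+1) := by
        apply pow_le_pow_right₀ (by norm_num) (Nat.le_succ n)
  have e3 : r^n ≤ r'^(n+1) := by
    calc r^n ≤ r'^n := pow_le_pow_left₀ hr hrr n
      _ ≤ r'^(n+1) := pow_le_pow_right₀ hr1 (Nat.le_succ n)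
  have e4 : ((n:ℝ)+1) * ‖c (n+1)‖ * r^n ≤ (2:ℝ)^(n+1) * ‖c (n+1)‖ * r'^(n+1) := by
    gcongr
  calc ((n:ℝ)+1) * ‖c (n+1)‖ * r^n ≤ (2:ℝ)^(n+1) * ‖c (n+1)‖ * r'^(n+1) := e4
    _ = ‖c (n+1)‖ * (2*r')^(n+1) := by rw [mul_pow]; ring

lemma summable_pow (c : ℕ → ℂ) (hc : ∀ r : ℝ, 0 ≤ r → Summable fun n : ℕ => ‖c n‖ * r ^ n)
    (z : ℂ) : Summable fun n : ℕ => c n * z ^ n := by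
  refine Summable.of_norm ?_
  simpa [norm_mul, norm_pow] using hc ‖z‖ (norm_nonneg _)

lemma hasDerivAt_tsum_pow (c : ℕ → ℂ)
    (hc : ∀ r : ℝ, 0 ≤ r → Summable fun n : ℕ => ‖c n‖ * r ^ n) (z : ℂ) :
    HasDerivAt (fun w : ℂ => ∑' n : ℕ, c n * w ^ n)
      (∑' n : ℕ, ((n:ℂ)+1) * c (n+1) * z ^ n) z := by
  set R : ℝ := ‖z‖ + 1 with hRdef
  have hR1 : (1:ℝ) ≤ R := le_add_of_nonneg_left (norm_nonneg z)
  have hR0 : (0:ℝ) < R := lt_of_lt_of_le one_pos hR1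
  set u : ℕ → ℝ := fun n => ‖c n‖ * (2*R)^n with hudef
  have hu : Summable u := hc _ (by positivity)
  have hbound : ∀ (n : ℕ) (y : ℂ), y ∈ Metric.ball (0:ℂ) R →
      ‖c n * ((n:ℂ) * y ^ (n-1))‖ ≤ u n := by
    intro n y hy
    rw [Metric.mem_ball, dist_zero_right] at hy
    have h1 : ‖c n * ((n:ℂ) * y ^ (n-1))‖ = ‖c n‖ * ((n:ℝ) * ‖y‖^(n-1)) := by
      rw [norm_mul, norm_mul, norm_pow, Complex.norm_natCast]
    rw [h1, hudef]
    have h2 : (n:ℝ) * ‖y‖^(n-1) ≤ (2*R)^n := by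
      have e2 : (n:ℝ) ≤ 2^n := by
        have := Nat.lt_two_pow_self (n := n)
        exact_mod_cast le_of_lt this
      have e3 : ‖y‖^(n-1) ≤ R^n := by
        calc ‖y‖^(n-1) ≤ R^(n-1) := pow_le_pow_left₀ (norm_nonneg _) (le_of_lt hy) _
          _ ≤ R^n := pow_le_pow_right₀ hR1 (Nat.sub_le n 1)
      calc (n:ℝ) * ‖y‖^(n-1) ≤ 2^n * R^n := by
            apply mul_le_mul e2 e3 (by positivity) (by positivity)
        _ = (2*R)^n := (mul_pow 2 R n).symm
    exact mul_le_mul_of_nonneg_left h2 (norm_nonneg _)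
  have main := hasDerivAt_tsum_of_isPreconnected hu (Metric.isOpen_ball)
    ((convex_ball (0:ℂ) R).isPreconnected)
    (fun n y _ => (hasDerivAt_pow n y).const_mul (c n)) hbound
    (Metric.mem_ball_self hR0)
    (summable_pow c hc 0)
    (by rw [Metric.mem_ball, dist_zero_right]; exact lt_add_one _)
  have hsum : Summable (fun n : ℕ => c n * ((n:ℂ) * z ^ (n-1))) := by
    refine Summable.of_norm (hu.of_nonneg_of_le (fun n => norm_nonneg _) (fun n => ?_))
    exact hbound n z (by rw [Metric.mem_ball, dist_zero_right]; exact lt_add_one _)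
  have heq : (∑' n : ℕ, c n * ((n:ℂ) * z ^ (n-1)))
      = ∑' n : ℕ, ((n:ℂ)+1) * c (n+1) * z ^ n := by
    rw [hsum.tsum_eq_zero_add]
    simp only [Nat.cast_zero, zero_mul, mul_zero, zero_add]
    exact tsum_congr fun n => by push_cast; ring
  rw [← heq]
  exact main

lemma hasDerivAt_F (hb : ∀ n : ℕ, ((n : ℝ) + 1) ≤ ‖b + n‖) (z : ℂ) :
    HasDerivAt (F a b) (F₁ a b z) z :=
  hasDerivAt_tsum_pow _ (coef_summable hb) z

lemma hasDerivAt_F₁ (hb : ∀ n : ℕ, ((n : ℝ) + 1) ≤ ‖b + n‖) (z : ℂ) :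
    HasDerivAt (F₁ a b) (F₂ a b z) z :=
  hasDerivAt_tsum_pow _ (shift_summable _ (coef_summable hb)) z

lemma kummer (hb : ∀ n : ℕ, ((n : ℝ) + 1) ≤ ‖b + n‖) (z : ℂ) :
    z * F₂ a b z + (b - z) * F₁ a b z - a * F a b z = 0 := by
  have hsc := coef_summable (a := a) hb
  have hsd := shift_summable _ hsc
  have hse := shift_summable _ hsd
  have h0 : HasSum (fun n : ℕ => coef a b n * z ^ n) (F a b z) :=
    (summable_pow _ hsc z).hasSum
  have h1 : HasSum (fun n : ℕ => coefD (coef a b) n * z ^ n) (F₁ a b z) :=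
    (summable_pow _ hsd z).hasSum
  have h2 : HasSum (fun n : ℕ => coefD (coefD (coef a b)) n * z ^ n) (F₂ a b z) :=
    (summable_pow _ hse z).hasSum
  have hzF1 : HasSum (fun n : ℕ => (n:ℂ) * coef a b n * z ^ n) (z * F₁ a b z) := by
    have h := h1.mul_left z
    have hfe : (fun n : ℕ => z * (coefD (coef a b) n * z ^ n))
        = (fun n : ℕ => ((n+1:ℕ):ℂ) * coef a b (n+1) * z ^ (n+1)) := by
      funext n; simp only [coefD]; push_cast; ring
    rw [hfe] at h
    have := (hasSum_nat_add_iff (f := fun n : ℕ => (n:ℂ) * coef a b n * z ^ n) 1).mp h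
    simpa using this
  have hzF2 : HasSum (fun n : ℕ => (n:ℂ) * coefD (coef a b) n * z ^ n) (z * F₂ a b z) := by
    have h := h2.mul_left z
    have hfe : (fun n : ℕ => z * (coefD (coefD (coef a b)) n * z ^ n))
        = (fun n : ℕ => ((n+1:ℕ):ℂ) * coefD (coef a b) (n+1) * z ^ (n+1)) := by
      funext n; simp only [coefD]; push_cast; ring
    rw [hfe] at h
    have := (hasSum_nat_add_iff (f := fun n : ℕ => (n:ℂ) * coefD (coef a b) n * z ^ n) 1).mp h
    simpa using this
  have hA : HasSum (fun n : ℕ => (n:ℂ) * coefD (coef a b) n * z ^ n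
      + b * (coefD (coef a b) n * z ^ n)) (z * F₂ a b z + b * F₁ a b z) :=
    hzF2.add (h1.mul_left b)
  have hB : HasSum (fun n : ℕ => (n:ℂ) * coef a b n * z ^ n
      + a * (coef a b n * z ^ n)) (z * F₁ a b z + a * F a b z) :=
    hzF1.add (h0.mul_left a)
  have hfe2 : (fun n : ℕ => (n:ℂ) * coefD (coef a b) n * z ^ n
      + b * (coefD (coef a b) n * z ^ n))
      = (fun n : ℕ => (n:ℂ) * coef a b n * z ^ n + a * (coef a b n * z ^ n)) := by
    funext n
    simp only [coefD]
    linear_combination (z ^ n) * coef_rec (a := a) hb n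
  rw [hfe2] at hA
  have := hA.unique hB
  linear_combination this

lemma F_zero (a b : ℂ) : F a b 0 = 1 := by
  rw [F, tsum_eq_single 0 (fun n hn => by simp [zero_pow hn])]
  simp [coef]

noncomputable def phi (a b : ℂ) (k : ℕ) (y : ℝ) : ℂ :=
  Complex.exp (-(y:ℂ)^2/2) * (y:ℂ)^(k+2) * F a b ((y:ℂ)^2)

noncomputable def phi1 (a b : ℂ) (k : ℕ) (y : ℝ) : ℂ :=
  Complex.exp (-(y:ℂ)^2/2) *
    ((-(y:ℂ)^(k+3) + ((k:ℂ)+2) * (y:ℂ)^(k+1)) * F a b ((y:ℂ)^2)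
      + 2 * (y:ℂ)^(k+3) * F₁ a b ((y:ℂ)^2))

noncomputable def phi2 (a b : ℂ) (k : ℕ) (y : ℝ) : ℂ :=
  Complex.exp (-(y:ℂ)^2/2) *
    ( ((y:ℂ)^(k+4) - (2*(k:ℂ)+5) * (y:ℂ)^(k+2) + ((k:ℂ)+2)*((k:ℂ)+1) * (y:ℂ)^k)
        * F a b ((y:ℂ)^2)
      + (-4 * (y:ℂ)^(k+4) + (4*(k:ℂ)+10) * (y:ℂ)^(k+2)) * F₁ a b ((y:ℂ)^2)
      + 4 * (y:ℂ)^(k+4) * F₂ a b ((y:ℂ)^2) )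

section calc_phi

variable (hb : ∀ n : ℕ, ((n : ℝ) + 1) ≤ ‖b + n‖) (k : ℕ)

lemma hYpow (n : ℕ) (y : ℝ) :
    HasDerivAt (fun y : ℝ => (y:ℂ)^n) ((n:ℂ) * (y:ℂ)^(n-1)) y := by
  exact (hasDerivAt_pow n (y:ℂ)).comp_ofReal

lemma hE (y : ℝ) :
    HasDerivAt (fun y : ℝ => Complex.exp (-(y:ℂ)^2/2)) (-(y:ℂ) * Complex.exp (-(y:ℂ)^2/2)) y := by
  have h2 : HasDerivAt (fun y : ℝ => -(y:ℂ)^2/2) (-(y:ℂ)) y := by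
    have := ((hYpow 2 y).neg).div_const 2
    refine this.congr_deriv ?_
    push_cast
    ring
  have := h2.cexp
  refine this.congr_deriv ?_
  ring

include hb in
lemma hu0 (y : ℝ) :
    HasDerivAt (fun y : ℝ => F a b ((y:ℂ)^2)) (F₁ a b ((y:ℂ)^2) * (2*(y:ℂ))) y := by
  have h2 : HasDerivAt (fun w : ℂ => w^2) (2*(y:ℂ)) (y:ℂ) := by
    simpa using hasDerivAt_pow 2 (y:ℂ)
  have hF : HasDerivAt (fun w : ℂ => F a b (w^2)) (F₁ a b ((y:ℂ)^2) * (2*(y:ℂ))) (y:ℂ) :=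
    by have := (hasDerivAt_F (a := a) hb ((y:ℂ)^2)).comp (y:ℂ) h2; exact this
  exact hF.comp_ofReal

include hb in
lemma hu1 (y : ℝ) :
    HasDerivAt (fun y : ℝ => F₁ a b ((y:ℂ)^2)) (F₂ a b ((y:ℂ)^2) * (2*(y:ℂ))) y := by
  have h2 : HasDerivAt (fun w : ℂ => w^2) (2*(y:ℂ)) (y:ℂ) := by
    simpa using hasDerivAt_pow 2 (y:ℂ)
  have hF : HasDerivAt (fun w : ℂ => F₁ a b (w^2)) (F₂ a b ((y:ℂ)^2) * (2*(y:ℂ))) (y:ℂ) :=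
    by have := (hasDerivAt_F₁ (a := a) hb ((y:ℂ)^2)).comp (y:ℂ) h2; exact this
  exact hF.comp_ofReal

include hb in
lemma hasDerivAt_phi (y : ℝ) : HasDerivAt (phi a b k) (phi1 a b k y) y := by
  have h := ((hE y).mul (hYpow (k+2) y)).mul (hu0 (a := a) hb y)
  have hfun : (fun y : ℝ => Complex.exp (-(y:ℂ)^2/2) * (y:ℂ)^(k+2) * F a b ((y:ℂ)^2))
      = phi a b k := by funext t; rw [phi]
  rw [← hfun]
  refine h.congr_deriv ?_
  rw [phi1]
  have hp : (k+2-1) = k+1 := by omega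
  rw [hp]
  push_cast
  simp only [Pi.mul_apply]
  ring

include hb in
lemma hasDerivAt_phi1 (y : ℝ) : HasDerivAt (phi1 a b k) (phi2 a b k y) y := by
  have hA : HasDerivAt (fun y : ℝ => (-(y:ℂ)^(k+3) + ((k:ℂ)+2) * (y:ℂ)^(k+1)))
      (-(((k:ℂ)+3) * (y:ℂ)^(k+2)) + ((k:ℂ)+2) * (((k:ℂ)+1) * (y:ℂ)^k)) y := by
    have h1 := ((hYpow (k+3) y).neg).add (((hYpow (k+1) y)).const_mul ((k:ℂ)+2))
    refine h1.congr_deriv ?_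
    have e1 : (k+3-1) = k+2 := by omega
    have e2 : (k+1-1) = k := by omega
    rw [e1, e2]
    push_cast
    ring
  have hS : HasDerivAt (fun y : ℝ => (-(y:ℂ)^(k+3) + ((k:ℂ)+2) * (y:ℂ)^(k+1)) * F a b ((y:ℂ)^2)
      + 2 * (y:ℂ)^(k+3) * F₁ a b ((y:ℂ)^2))
      ((-(((k:ℂ)+3) * (y:ℂ)^(k+2)) + ((k:ℂ)+2) * (((k:ℂ)+1) * (y:ℂ)^k)) * F a b ((y:ℂ)^2)
        + (-(y:ℂ)^(k+3) + ((k:ℂ)+2) * (y:ℂ)^(k+1)) * (F₁ a b ((y:ℂ)^2) * (2*(y:ℂ)))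
        + (2 * (((k:ℂ)+3) * (y:ℂ)^(k+2)) * F₁ a b ((y:ℂ)^2)
          + 2 * (y:ℂ)^(k+3) * (F₂ a b ((y:ℂ)^2) * (2*(y:ℂ))))) y := by
    refine (hA.mul (hu0 (a := a) hb y)).add ?_
    have h2 := (((hYpow (k+3) y)).const_mul (2:ℂ)).mul (hu1 (a := a) hb y)
    refine h2.congr_deriv ?_
    have e1 : (k+3-1) = k+2 := by omega
    rw [e1]
    push_cast
    ring
  have h := (hE y).mul hS
  have hfun : (fun y : ℝ => Complex.exp (-(y:ℂ)^2/2) *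
      ((-(y:ℂ)^(k+3) + ((k:ℂ)+2) * (y:ℂ)^(k+1)) * F a b ((y:ℂ)^2)
        + 2 * (y:ℂ)^(k+3) * F₁ a b ((y:ℂ)^2))) = phi1 a b k := by
    funext t; rw [phi1]
  rw [← hfun]
  refine h.congr_deriv ?_
  rw [phi2]
  ring

include hb in
lemma phi_ode (m : ℝ) (ha : a = (2*(k:ℂ)+5-(m:ℂ))/4) (hbv : b = (k:ℂ)+5/2) (y : ℝ) :
    ((y:ℂ))^2 * deriv (deriv (phi a b k)) y
      = ((((k:ℂ)+2)*((k:ℂ)+1)) - (m:ℂ)*(y:ℂ)^2 + (y:ℂ)^4) * phi a b k y := by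
  have hd1 : deriv (phi a b k) = phi1 a b k := funext fun t => (hasDerivAt_phi hb k t).deriv
  rw [hd1, (hasDerivAt_phi1 hb k y).deriv]
  subst ha hbv
  have hk := kummer (a := (2*(k:ℂ)+5-(m:ℂ))/4) hb ((y:ℂ)^2)
  rw [phi2, phi]
  linear_combination (4 * Complex.exp (-(y:ℂ)^2/2) * (y:ℂ)^(k+4)) * hk

include hb in
lemma phi_contDiff : ContDiff ℝ (⊤ : ℕ∞) (phi a b k) := by
  have hFdiff : Differentiable ℂ (F a b) := fun z => (hasDerivAt_F hb z).differentiableAt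
  have hFanal : AnalyticOnNhd ℂ (F a b) Set.univ :=
    hFdiff.differentiableOn.analyticOnNhd isOpen_univ
  have hFc : ContDiff ℝ (⊤ : ℕ∞) (F a b) := (hFanal.contDiff).restrict_scalars ℝ
  have hsq : ContDiff ℝ (⊤ : ℕ∞) (fun y : ℝ => ((y:ℂ))^2) := Complex.ofRealCLM.contDiff.pow 2
  have h1 : ContDiff ℝ (⊤ : ℕ∞) (fun y : ℝ => Complex.exp (-(y:ℂ)^2/2)) := by
    exact (Complex.contDiff_exp (𝕜 := ℝ)).comp ((hsq.neg).div_const 2)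
  have h2 : ContDiff ℝ (⊤ : ℕ∞) (fun y : ℝ => ((y:ℂ))^(k+2)) := Complex.ofRealCLM.contDiff.pow (k+2)
  have h3 : ContDiff ℝ (⊤ : ℕ∞) (fun y : ℝ => F a b ((y:ℂ)^2)) := hFc.comp hsq
  exact (h1.mul h2).mul h3

end calc_phi

lemma diff_deriv {f : ℝ → ℂ} (h : ContDiff ℝ (⊤ : ℕ∞) f) : Differentiable ℝ (deriv f) := by
  have h1 : ContDiff ℝ ((⊤:ℕ∞) : WithTop ℕ∞) f := h.of_le (by simp)
  exact ((contDiff_infty_iff_deriv.mp h1).2).differentiable (by simp)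

lemma ode_unique (q H : ℝ → ℂ) (A B t₀ : ℝ) (ht₀ : t₀ ∈ Set.Ioo A B)
    (hq : ContinuousOn q (Set.Icc A B))
    (hH1 : Differentiable ℝ H) (hH2 : Differentiable ℝ (deriv H))
    (hode : ∀ t ∈ Set.Icc A B, deriv (deriv H) t = q t * H t)
    (h0 : H t₀ = 0) (h0' : deriv H t₀ = 0) :
    ∀ t ∈ Set.Icc A B, H t = 0 := by
  obtain ⟨C, hC⟩ := isCompact_Icc.exists_bound_of_continuousOn hq
  have hC0 : (0:ℝ) ≤ C := le_trans (norm_nonneg _)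
    (hC A ⟨le_refl A, le_of_lt (lt_trans ht₀.1 ht₀.2)⟩)
  set Kr : ℝ := max 1 C with hKr
  have hKr0 : (0:ℝ) ≤ Kr := le_trans zero_le_one (le_max_left _ _)
  set K : NNReal := Real.toNNReal Kr with hK
  have hKco : (K : ℝ) = Kr := Real.coe_toNNReal _ hKr0
  set v : ℝ → ℂ × ℂ → ℂ × ℂ := fun t p => (p.2, q t * p.1) with hv_def
  set s : ℝ → Set (ℂ × ℂ) := fun t => if t ∈ Set.Icc A B then Set.univ else ∅ with hs_def
  have hv : ∀ t, LipschitzOnWith K (v t) (s t) := by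
    intro t
    by_cases h : t ∈ Set.Icc A B
    · rw [hs_def]
      simp only [if_pos h]
      rw [lipschitzOnWith_univ]
      apply LipschitzWith.of_dist_le_mul
      intro p p'
      rw [Prod.dist_eq, Prod.dist_eq]
      have e1 : dist (v t p).1 (v t p').1 = dist p.2 p'.2 := rfl
      have e2 : dist (v t p).2 (v t p').2 = ‖q t‖ * dist p.1 p'.1 := by
        show dist (q t * p.1) (q t * p'.1) = _
        rw [dist_eq_norm, ← mul_sub, norm_mul, dist_eq_norm]
      rw [e1, e2, hKco]
      have hd1 : (0:ℝ) ≤ dist p.1 p'.1 := dist_nonneg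
      have hd2 : (0:ℝ) ≤ dist p.2 p'.2 := dist_nonneg
      apply max_le
      · calc dist p.2 p'.2 ≤ max (dist p.1 p'.1) (dist p.2 p'.2) := le_max_right _ _
          _ ≤ Kr * max (dist p.1 p'.1) (dist p.2 p'.2) :=
            le_mul_of_one_le_left (le_max_of_le_right hd2) (le_max_left _ _)
      · calc ‖q t‖ * dist p.1 p'.1 ≤ C * dist p.1 p'.1 :=
            mul_le_mul_of_nonneg_right (hC t h) hd1
          _ ≤ Kr * max (dist p.1 p'.1) (dist p.2 p'.2) := by
            apply mul_le_mul (le_max_right _ _) (le_max_left _ _) hd1 hKr0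
    · rw [hs_def]
      simp only [if_neg h]
      exact lipschitzOnWith_empty _ _
  set f : ℝ → ℂ × ℂ := fun t => (H t, deriv H t) with hf_def
  set g : ℝ → ℂ × ℂ := fun _ => ((0:ℂ), (0:ℂ)) with hg_def
  have hfc : ContinuousOn f (Set.Icc A B) :=
    (hH1.continuous.prodMk hH2.continuous).continuousOn
  have hf' : ∀ t ∈ Set.Ioo A B, HasDerivAt f (v t (f t)) t := by
    intro t ht
    have h1 : HasDerivAt H (deriv H t) t := (hH1 t).hasDerivAt
    have h2 : HasDerivAt (deriv H) (deriv (deriv H) t) t := (hH2 t).hasDerivAt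
    have h3 := h1.prodMk h2
    have heq2 : v t (f t) = (deriv H t, deriv (deriv H) t) := by
      rw [hv_def, hf_def]
      simp only
      rw [hode t (Set.Ioo_subset_Icc_self ht)]
    rw [heq2]
    exact h3
  have hfs : ∀ t ∈ Set.Ioo A B, f t ∈ s t := by
    intro t ht
    rw [hs_def]
    simp only [if_pos (Set.Ioo_subset_Icc_self ht)]
    trivial
  have hgc : ContinuousOn g (Set.Icc A B) := continuousOn_const
  have hg' : ∀ t ∈ Set.Ioo A B, HasDerivAt g (v t (g t)) t := by
    intro t ht
    have heq2 : v t (g t) = ((0:ℂ), (0:ℂ)) := by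
      rw [hv_def, hg_def]
      simp
    rw [heq2]
    exact hasDerivAt_const t _
  have hgs : ∀ t ∈ Set.Ioo A B, g t ∈ s t := by
    intro t ht
    rw [hs_def]
    simp only [if_pos (Set.Ioo_subset_Icc_self ht)]
    trivial
  have heq : f t₀ = g t₀ := by
    rw [hf_def, hg_def]
    simp only [Prod.mk.injEq]
    exact ⟨h0, h0'⟩
  have main := ODE_solution_unique_of_mem_Icc (fun t _ => hv t) ht₀ hfc hf' hfs hgc hg' hgs heq
  intro t ht
  have h5 := main ht
  have h6 : (f t).1 = (g t).1 := congrArg Prod.fst h5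
  simpa [hf_def, hg_def] using h6

lemma ode_zero_on (L m : ℂ) (H : ℝ → ℂ) (hH1 : Differentiable ℝ H) (hH2 : Differentiable ℝ (deriv H))
    (hode : ∀ y : ℝ, (y:ℂ)^2 * deriv (deriv H) y = (L - m * (y:ℂ)^2 + (y:ℂ)^4) * H y)
    (A B t₀ : ℝ) (hne : ∀ t ∈ Set.Icc A B, t ≠ 0) (ht₀ : t₀ ∈ Set.Ioo A B)
    (h0 : H t₀ = 0) (h0' : deriv H t₀ = 0) : ∀ t ∈ Set.Icc A B, H t = 0 := by
  have hqcont : ContinuousOn (fun t : ℝ => (L - m * (t:ℂ)^2 + (t:ℂ)^4) / (t:ℂ)^2)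
      (Set.Icc A B) := by
    apply ContinuousOn.div
    · exact Continuous.continuousOn (((continuous_const.sub
        (continuous_const.mul (Complex.continuous_ofReal.pow 2))).add
        (Complex.continuous_ofReal.pow 4)))
    · exact (Complex.continuous_ofReal.pow 2).continuousOn
    · intro t ht
      exact pow_ne_zero _ (Complex.ofReal_ne_zero.mpr (hne t ht))
  have hodeIcc : ∀ t ∈ Set.Icc A B, deriv (deriv H) t
      = (L - m * (t:ℂ)^2 + (t:ℂ)^4) / (t:ℂ)^2 * H t := by
    intro t ht
    have ht2 : ((t:ℂ))^2 ≠ 0 := pow_ne_zero _ (Complex.ofReal_ne_zero.mpr (hne t ht))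
    have h1 := hode t
    rw [div_mul_eq_mul_div, eq_div_iff ht2]
    linear_combination h1
  exact ode_unique _ H A B t₀ ht₀ hqcont hH1 hH2 hodeIcc h0 h0'

lemma wronsk_zero (L m : ℂ) (H G₀ : ℝ → ℂ) (hH1 : Differentiable ℝ H)
    (hH2 : Differentiable ℝ (deriv H))
    (hG1 : Differentiable ℝ G₀) (hG2 : Differentiable ℝ (deriv G₀))
    (hodeH : ∀ y : ℝ, (y:ℂ)^2 * deriv (deriv H) y = (L - m * (y:ℂ)^2 + (y:ℂ)^4) * H y)
    (hodeG : ∀ y : ℝ, (y:ℂ)^2 * deriv (deriv G₀) y = (L - m * (y:ℂ)^2 + (y:ℂ)^4) * G₀ y)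
    (hH0 : H 0 = 0) (hG0 : G₀ 0 = 0) (y : ℝ) :
    H y * deriv G₀ y - deriv H y * G₀ y = 0 := by
  set W : ℝ → ℂ := fun y => H y * deriv G₀ y - deriv H y * G₀ y with hW
  have hWd : ∀ y : ℝ, HasDerivAt W (H y * deriv (deriv G₀) y - deriv (deriv H) y * G₀ y) y := by
    intro y
    have h1 := ((hH1 y).hasDerivAt.mul (hG2 y).hasDerivAt).sub
      ((hH2 y).hasDerivAt.mul (hG1 y).hasDerivAt)
    refine h1.congr_deriv ?_
    ring
  have hWzero : ∀ y : ℝ, H y * deriv (deriv G₀) y - deriv (deriv H) y * G₀ y = 0 := by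
    intro y
    by_cases hy : y = (0:ℝ)
    · subst hy
      rw [hH0, hG0]
      ring
    · have hy2 : ((y:ℂ))^2 ≠ 0 := pow_ne_zero _ (Complex.ofReal_ne_zero.mpr hy)
      have h2 : ((y:ℂ))^2 * (H y * deriv (deriv G₀) y - deriv (deriv H) y * G₀ y) = 0 := by
        linear_combination H y * hodeG y - G₀ y * hodeH y
      exact (mul_eq_zero.mp h2).resolve_left hy2
  have hWc : W y = W 0 := is_const_of_deriv_eq_zero
    (fun y => (hWd y).differentiableAt)
    (fun y => by rw [(hWd y).deriv]; exact hWzero y) y 0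
  have hW0 : W 0 = 0 := by
    show H 0 * deriv G₀ 0 - deriv H 0 * G₀ 0 = 0
    rw [hH0, hG0]; ring
  exact hWc.trans hW0

lemma taylor_glue (H ψ : ℝ → ℂ) (n : ℕ) (e : ℂ) (hH : ContDiff ℝ (⊤ : ℕ∞) H)
    (hpos : ∀ t : ℝ, 0 < t → H t = 0) (hψc : Continuous ψ) (hψ0 : ψ 0 = 1)
    (hneg : ∀ t : ℝ, t < 0 → H t = e * (t:ℂ)^n * ψ t) : e = 0 := by
  have hcont : ∀ j : ℕ, Continuous (iteratedDeriv j H) := fun j =>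
    hH.continuous_iteratedDeriv j (by exact_mod_cast le_top)
  have hdiff : ∀ j : ℕ, Differentiable ℝ (iteratedDeriv j H) := fun j =>
    hH.differentiable_iteratedDeriv j (by exact_mod_cast ENat.coe_lt_top j)
  have hzero : ∀ j : ℕ, iteratedDeriv j H 0 = 0 := by
    intro j
    have h1 : Filter.Tendsto (iteratedDeriv j H) (𝓝[>] (0:ℝ)) (𝓝 (iteratedDeriv j H 0)) :=
      ((hcont j).tendsto 0).mono_left nhdsWithin_le_nhds
    have h2 : Filter.Tendsto (iteratedDeriv j H) (𝓝[>] (0:ℝ)) (𝓝 0) := by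
      refine tendsto_const_nhds.congr' ?_
      filter_upwards [self_mem_nhdsWithin] with t (ht : (0:ℝ) < t)
      have hev : H =ᶠ[𝓝 t] fun _ => (0:ℂ) := by
        filter_upwards [Ioi_mem_nhds ht] with u (hu : (0:ℝ) < u)
        exact hpos u hu
      rw [hev.iteratedDeriv_eq j, iteratedDeriv_fun_const_zero]
    exact tendsto_nhds_unique h1 h2
  by_contra he
  have hepos : 0 < ‖e‖ := norm_pos_iff.mpr he
  obtain ⟨s, hs0, hs⟩ := Metric.continuousAt_iff.mp (hcont n).continuousAt (‖e‖/4)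
    (by positivity)
  obtain ⟨s', hs'0, hs'⟩ := Metric.continuousAt_iff.mp (hψc.continuousAt (x := 0)) (1/2) (by norm_num)
  have hind : ∀ j : ℕ, j ≤ n → ∀ x : ℝ, -s < x → x ≤ 0 →
      ‖iteratedDeriv (n - j) H x‖ ≤ ‖e‖/4 * |x|^j := by
    intro j
    induction j with
    | zero =>
      intro _ x hx1 hx2
      have h := hs (x := x) (by rw [Real.dist_eq, sub_zero, abs_lt]; constructor <;> linarith)
      rw [dist_eq_norm, hzero n, sub_zero] at h
      simpa using h.le
    | succ j ih =>
      intro hj x hx1 hx2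
      have heq : iteratedDeriv (n - j) H = deriv (iteratedDeriv (n - (j+1)) H) := by
        rw [← iteratedDeriv_succ]; congr 1; omega
      have hb : ∀ t ∈ Set.Icc x 0,
          ‖deriv (iteratedDeriv (n - (j+1)) H) t‖ ≤ ‖e‖/4 * |x|^j := by
        intro t ht
        rw [← heq]
        refine (ih (by omega) t (by linarith [ht.1]) ht.2).trans ?_
        exact mul_le_mul_of_nonneg_left (pow_le_pow_left₀ (abs_nonneg t)
          (by rw [abs_of_nonpos ht.2, abs_of_nonpos hx2]; linarith [ht.1]) j) (by positivity)
      have hmv := Convex.norm_image_sub_le_of_norm_deriv_le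
        (fun t _ => (hdiff (n - (j+1)) t)) hb (convex_Icc x 0)
        (Set.right_mem_Icc.mpr hx2) (Set.left_mem_Icc.mpr hx2)
      rw [hzero, sub_zero, Real.norm_eq_abs, sub_zero] at hmv
      calc ‖iteratedDeriv (n - (j+1)) H x‖ ≤ ‖e‖/4 * |x|^j * |x| := hmv
        _ = ‖e‖/4 * |x|^(j+1) := by ring
  have hfin := hind n le_rfl
  have hmin : 0 < min s s' := lt_min hs0 hs'0
  set x : ℝ := -(min s s')/2 with hx
  have hx0 : x < 0 := by rw [hx]; linarith
  have hxs : -s < x := by rw [hx]; linarith [min_le_left s s']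
  have hxs' : |x| < s' := by rw [abs_of_neg hx0, hx]; linarith [min_le_right s s']
  have h1 := hfin x hxs hx0.le
  rw [Nat.sub_self, iteratedDeriv_zero, hneg x hx0, norm_mul, norm_mul, norm_pow,
    Complex.norm_real, Real.norm_eq_abs] at h1
  have hψx : 1/2 ≤ ‖ψ x‖ := by
    have h := hs' (x := x) (by rw [Real.dist_eq, sub_zero]; exact hxs')
    rw [hψ0, dist_eq_norm] at h
    have h3 := norm_sub_norm_le (1:ℂ) (ψ x)
    rw [norm_sub_rev, norm_one] at h3
    linarith
  have hpow : 0 < |x|^n := pow_pos (abs_pos.mpr hx0.ne) n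
  nlinarith [mul_nonneg (mul_pos hepos hpow).le (sub_nonneg.mpr hψx), mul_pos hepos hpow]

end CHG

/-- The confluent hypergeometric function
`₁F₁(a;b;z) = Σ_{n≥0} ((a)_n/(b)_n) zⁿ/n!` (Pochhammer rising factorials). -/
noncomputable def oneFone (a b z : ℂ) : ℂ :=
  ∑' n : ℕ, ((ascPochhammer ℂ n).eval a / (ascPochhammer ℂ n).eval b) * z ^ n
    / (n.factorial : ℂ)

lemma oneFone_eq (a b z : ℂ) : oneFone a b z = CHG.F a b z := by
  refine tsum_congr fun n => ?_
  simp only [CHG.coef]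
  ring

/-- For `l ≥ 2`, `λ = l(l-1)/2` and any `m ∈ ℝ`, the space of smooth solutions on `ℝ`
of `y²G'' = (2λ - my² + y⁴)G` is exactly the set of scalar multiples of
`G₀(y) = e^{-y²/2} y^l ₁F₁((1+2l-m)/4; l+1/2; y²)`. -/
theorem smooth_solution_space_one_dimensional (l : ℕ) (hl : 2 ≤ l) (m : ℝ)
    (lam : ℂ) (hlam : lam = (l : ℂ) * ((l : ℂ) - 1) / 2)
    (G₀ : ℝ → ℂ)
    (hG₀ : ∀ y : ℝ, G₀ y
      = Complex.exp (-(y : ℂ) ^ 2 / 2) * (y : ℂ) ^ l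
        * oneFone ((1 + 2 * (l : ℂ) - (m : ℂ)) / 4) ((l : ℂ) + 1/2) ((y : ℂ) ^ 2)) :
    {G : ℝ → ℂ | ContDiff ℝ (⊤ : ℕ∞) G ∧
        ∀ y : ℝ, (y : ℂ) ^ 2 * deriv (deriv G) y
          = (2 * lam - (m : ℂ) * (y : ℂ) ^ 2 + (y : ℂ) ^ 4) * G y}
      = {G : ℝ → ℂ | ∃ c : ℂ, G = fun y => c * G₀ y} := by
  subst hlam
  obtain ⟨k, rfl⟩ : ∃ k, l = k + 2 := ⟨l - 2, by omega⟩
  set a : ℂ := (2*(k:ℂ)+5-(m:ℂ))/4 with ha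
  set b : ℂ := (k:ℂ)+5/2 with hbv
  have hb : ∀ n : ℕ, ((n : ℝ) + 1) ≤ ‖b + n‖ := by
    intro n
    have e1 : b + (n:ℂ) = (((k:ℝ) + 5/2 + n : ℝ) : ℂ) := by rw [hbv]; push_cast; ring
    rw [e1, Complex.norm_real, Real.norm_eq_abs]
    have hk0 : (0:ℝ) ≤ (k:ℝ) := Nat.cast_nonneg k
    calc ((n:ℝ)+1) ≤ (k:ℝ) + 5/2 + n := by linarith
      _ ≤ |(k:ℝ) + 5/2 + n| := le_abs_self _
  have ea : (1 + 2*(((k+2:ℕ)):ℂ) - (m:ℂ))/4 = a := by rw [ha]; push_cast; ring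
  have eb : (((k+2:ℕ)):ℂ) + 1/2 = b := by rw [hbv]; push_cast; ring
  have hG₀φ : G₀ = CHG.phi a b k := by
    funext y
    rw [hG₀ y, ea, eb, oneFone_eq, CHG.phi]
  have hsmooth : ContDiff ℝ (⊤ : ℕ∞) G₀ := by rw [hG₀φ]; exact CHG.phi_contDiff hb k
  have hodeG₀ : ∀ y : ℝ, (y:ℂ)^2 * deriv (deriv G₀) y
      = (2 * ((((k+2:ℕ)):ℂ) * ((((k+2:ℕ)):ℂ) - 1) / 2) - (m:ℂ) * (y:ℂ)^2 + (y:ℂ)^4) * G₀ y := by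
    intro y
    rw [hG₀φ]
    have h := CHG.phi_ode hb k m ha hbv y
    push_cast
    push_cast at h
    linear_combination h
  have hG₀0 : G₀ 0 = 0 := by
    rw [hG₀φ, CHG.phi]
    rw [Complex.ofReal_zero, zero_pow (by omega : k+2 ≠ 0)]
    ring
  have hG₀d : Differentiable ℝ G₀ := hsmooth.differentiable (by simp)
  have hG₀d2 : Differentiable ℝ (deriv G₀) := CHG.diff_deriv hsmooth
  have hFdiff : Differentiable ℂ (CHG.F a b) := fun z => (CHG.hasDerivAt_F hb z).differentiableAt
  set ψ : ℝ → ℂ := fun y => Complex.exp (-(y:ℂ)^2/2) * CHG.F a b ((y:ℂ)^2) with hψ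
  have hψc : Continuous ψ := by
    apply Continuous.mul
    · exact Complex.continuous_exp.comp (((Complex.continuous_ofReal.pow 2).neg).div_const 2)
    · exact hFdiff.continuous.comp (Complex.continuous_ofReal.pow 2)
  have hψ0 : ψ 0 = 1 := by
    show Complex.exp (-((0:ℝ):ℂ)^2/2) * CHG.F a b (((0:ℝ):ℂ)^2) = 1
    rw [Complex.ofReal_zero]
    simp [CHG.F_zero]
  have hev : ∀ᶠ y in 𝓝 (0:ℝ), ψ y ≠ 0 :=
    hψc.continuousAt.eventually_ne (by rw [hψ0]; exact one_ne_zero)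
  obtain ⟨δ, hδ0, hδ⟩ := Metric.eventually_nhds_iff.mp hev
  set y₁ : ℝ := δ/2 with hy₁def
  have hy₁pos : 0 < y₁ := by rw [hy₁def]; positivity
  have hG₀ψ : ∀ y : ℝ, G₀ y = (y:ℂ)^(k+2) * ψ y := by
    intro y
    rw [hG₀φ, CHG.phi, hψ]
    ring
  have hy₁ne : G₀ y₁ ≠ 0 := by
    rw [hG₀ψ]
    apply mul_ne_zero (pow_ne_zero _ (Complex.ofReal_ne_zero.mpr (ne_of_gt hy₁pos)))
    apply hδ
    rw [dist_zero_right, Real.norm_eq_abs, abs_of_pos hy₁pos, hy₁def]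
    linarith
  ext G
  simp only [Set.mem_setOf_eq]
  constructor
  · rintro ⟨hG, hode⟩
    have hGd : Differentiable ℝ G := hG.differentiable (by simp)
    have hGd2 : Differentiable ℝ (deriv G) := CHG.diff_deriv hG
    have hk2 : (((k+2:ℕ)):ℂ) ≠ 0 := Nat.cast_ne_zero.mpr (by omega)
    have hk1 : (((k+2:ℕ)):ℂ) - 1 ≠ 0 := by
      have : (((k+2:ℕ)):ℂ) - 1 = ((k+1:ℕ):ℂ) := by push_cast; ring
      rw [this]
      exact Nat.cast_ne_zero.mpr (by omega)
    have hlamne : (2 : ℂ) * ((((k+2:ℕ)):ℂ) * ((((k+2:ℕ)):ℂ) - 1) / 2) ≠ 0 := by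
      have e : (2 : ℂ) * ((((k+2:ℕ)):ℂ) * ((((k+2:ℕ)):ℂ) - 1) / 2)
          = ((k+2:ℕ):ℂ) * ((k+1:ℕ):ℂ) := by push_cast; ring
      rw [e]
      exact mul_ne_zero (Nat.cast_ne_zero.mpr (by omega)) (Nat.cast_ne_zero.mpr (by omega))
    have hG0 : G 0 = 0 := by
      have h := hode 0
      rw [Complex.ofReal_zero] at h
      have h2 : (2 * ((((k+2:ℕ)):ℂ) * ((((k+2:ℕ)):ℂ) - 1) / 2)) * G 0 = 0 := by
        linear_combination -h
      rcases mul_eq_zero.mp h2 with h3 | h3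
      · exact absurd h3 hlamne
      · exact h3
    set c : ℂ := G y₁ / G₀ y₁ with hc
    set H : ℝ → ℂ := fun y => G y - c * G₀ y with hH
    have hHy : ∀ y, H y = G y - c * G₀ y := fun y => rfl
    have hH1 : Differentiable ℝ H := hGd.sub (hG₀d.const_mul c)
    have hderivH : deriv H = fun y => deriv G y - c * deriv G₀ y := by
      funext y
      rw [hH, deriv_fun_sub (hGd y) ((hG₀d y).const_mul c), deriv_const_mul_field]
    have hH2 : Differentiable ℝ (deriv H) := by
      rw [hderivH]
      exact hGd2.sub (hG₀d2.const_mul c)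
    have hdd : ∀ y, deriv (deriv H) y = deriv (deriv G) y - c * deriv (deriv G₀) y := by
      intro y
      rw [hderivH]
      rw [deriv_fun_sub (hGd2 y) ((hG₀d2 y).const_mul c), deriv_const_mul_field]
    have hodeH : ∀ y : ℝ, (y:ℂ)^2 * deriv (deriv H) y
        = (2 * ((((k+2:ℕ)):ℂ) * ((((k+2:ℕ)):ℂ) - 1) / 2) - (m:ℂ) * (y:ℂ)^2 + (y:ℂ)^4) * H y := by
      intro y
      rw [hdd y, hHy y]
      linear_combination hode y - c * hodeG₀ y
    have hH0 : H 0 = 0 := by rw [hHy, hG0, hG₀0]; ring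
    have hHy₁ : H y₁ = 0 := by
      rw [hHy, hc]
      field_simp
      ring
    set W : ℝ → ℂ := fun y => H y * deriv G₀ y - deriv H y * G₀ y with hW
    have hWy : ∀ y, W y = H y * deriv G₀ y - deriv H y * G₀ y := fun y => rfl
    have hWd : ∀ y : ℝ, HasDerivAt W (H y * deriv (deriv G₀) y - deriv (deriv H) y * G₀ y) y := by
      intro y
      have h1 := ((hH1 y).hasDerivAt.mul (hG₀d2 y).hasDerivAt).sub
        ((hH2 y).hasDerivAt.mul (hG₀d y).hasDerivAt)
      refine h1.congr_deriv ?_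
      ring
    have hWzero : ∀ y : ℝ, H y * deriv (deriv G₀) y - deriv (deriv H) y * G₀ y = 0 := by
      intro y
      by_cases hy : y = (0:ℝ)
      · subst hy
        rw [hH0, hG₀0]
        ring
      · have hy2 : ((y:ℂ))^2 ≠ 0 := pow_ne_zero _ (Complex.ofReal_ne_zero.mpr hy)
        have h2 : ((y:ℂ))^2 * (H y * deriv (deriv G₀) y - deriv (deriv H) y * G₀ y) = 0 := by
          linear_combination H y * hodeG₀ y - G₀ y * hodeH y
        exact (mul_eq_zero.mp h2).resolve_left hy2
    have hWc : W y₁ = W 0 := is_const_of_deriv_eq_zero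
      (fun y => (hWd y).differentiableAt)
      (fun y => by rw [(hWd y).deriv]; exact hWzero y) y₁ 0
    have hW0 : W 0 = 0 := by rw [hWy, hH0, hG₀0]; ring
    have hH'y₁ : deriv H y₁ = 0 := by
      have h3 : W y₁ = 0 := hWc.trans hW0
      rw [hWy, hHy₁] at h3
      have h4 : deriv H y₁ * G₀ y₁ = 0 := by linear_combination -h3
      exact (mul_eq_zero.mp h4).resolve_right hy₁ne
    have hpos : ∀ t : ℝ, 0 < t → H t = 0 := by
      intro t ht
      have hA : 0 < min t y₁ / 2 := by have := lt_min ht hy₁pos; linarith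
      exact CHG.ode_zero_on _ _ H hH1 hH2 hodeH (min t y₁ / 2) (2 * max t y₁) y₁
        (fun s hs => ne_of_gt (lt_of_lt_of_le hA hs.1))
        ⟨by have := min_le_right t y₁; linarith, by have := le_max_right t y₁; linarith⟩
        hHy₁ hH'y₁ t ⟨by have := min_le_left t y₁; linarith, by have := le_max_left t y₁; linarith⟩
    have hy₂ : G₀ (-y₁) ≠ 0 := by
      rw [hG₀ψ]
      apply mul_ne_zero (pow_ne_zero _ (Complex.ofReal_ne_zero.mpr (neg_ne_zero.mpr (ne_of_gt hy₁pos))))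
      apply hδ
      rw [dist_zero_right, Real.norm_eq_abs, abs_neg, abs_of_pos hy₁pos, hy₁def]
      linarith
    set d : ℂ := G (-y₁) / G₀ (-y₁) with hd
    set H₂ : ℝ → ℂ := fun y => G y - d * G₀ y with hH₂
    have hH₂y : ∀ y, H₂ y = G y - d * G₀ y := fun y => rfl
    have hH₂1 : Differentiable ℝ H₂ := hGd.sub (hG₀d.const_mul d)
    have hderivH₂ : deriv H₂ = fun y => deriv G y - d * deriv G₀ y := by
      funext y
      rw [hH₂, deriv_fun_sub (hGd y) ((hG₀d y).const_mul d), deriv_const_mul_field]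
    have hH₂2 : Differentiable ℝ (deriv H₂) := by
      rw [hderivH₂]
      exact hGd2.sub (hG₀d2.const_mul d)
    have hdd₂ : ∀ y, deriv (deriv H₂) y = deriv (deriv G) y - d * deriv (deriv G₀) y := by
      intro y
      rw [hderivH₂]
      rw [deriv_fun_sub (hGd2 y) ((hG₀d2 y).const_mul d), deriv_const_mul_field]
    have hodeH₂ : ∀ y : ℝ, (y:ℂ)^2 * deriv (deriv H₂) y
        = (2 * ((((k+2:ℕ)):ℂ) * ((((k+2:ℕ)):ℂ) - 1) / 2) - (m:ℂ) * (y:ℂ)^2 + (y:ℂ)^4) * H₂ y := by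
      intro y
      rw [hdd₂ y, hH₂y y]
      linear_combination hode y - d * hodeG₀ y
    have hH₂0 : H₂ 0 = 0 := by rw [hH₂y, hG0, hG₀0]; ring
    have hH₂y₁ : H₂ (-y₁) = 0 := by
      rw [hH₂y, hd, div_mul_cancel₀ _ hy₂, sub_self]
    have hH₂'y₁ : deriv H₂ (-y₁) = 0 := by
      have h3 := CHG.wronsk_zero _ _ H₂ G₀ hH₂1 hH₂2 hG₀d hG₀d2 hodeH₂ hodeG₀ hH₂0 hG₀0 (-y₁)
      rw [hH₂y₁] at h3
      have h4 : deriv H₂ (-y₁) * G₀ (-y₁) = 0 := by linear_combination -h3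
      exact (mul_eq_zero.mp h4).resolve_right hy₂
    have hneg : ∀ t : ℝ, t < 0 → H₂ t = 0 := by
      intro t ht
      have hB : max t (-y₁) < 0 := max_lt ht (by linarith)
      exact CHG.ode_zero_on _ _ H₂ hH₂1 hH₂2 hodeH₂ (2 * min t (-y₁)) (max t (-y₁) / 2) (-y₁)
        (fun s hs => ne_of_lt (by linarith [hs.2]))
        ⟨by have := min_le_right t (-y₁); linarith, by have := le_max_right t (-y₁); linarith⟩
        hH₂y₁ hH₂'y₁ t
        ⟨by have := min_le_left t (-y₁); linarith, by have := le_max_left t (-y₁); linarith⟩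
    have hHs : ContDiff ℝ (⊤ : ℕ∞) H := hG.sub (contDiff_const.mul hsmooth)
    have hdc : d - c = 0 := by
      refine CHG.taylor_glue H ψ (k+2) (d - c) hHs hpos hψc hψ0 (fun t ht => ?_)
      have h1 := hneg t ht
      rw [hH₂y, hG₀ψ] at h1
      rw [hHy, hG₀ψ]
      linear_combination h1
    refine ⟨c, funext fun y => ?_⟩
    rcases lt_trichotomy y 0 with hy | hy | hy
    · have h1 := hneg y hy
      rw [hH₂y] at h1
      have hdc' : d = c := sub_eq_zero.mp hdc
      rw [hdc'] at h1
      exact sub_eq_zero.mp h1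
    · subst hy
      show G 0 = c * G₀ 0
      rw [hG0, hG₀0, mul_zero]
    · have h1 := hpos y hy
      rw [hHy] at h1
      exact sub_eq_zero.mp h1
  · rintro ⟨c, rfl⟩
    refine ⟨contDiff_const.mul hsmooth, fun y => ?_⟩
    have hd : deriv (fun y : ℝ => c * G₀ y) = fun y => c * deriv G₀ y :=
      funext fun t => deriv_const_mul_field c
    rw [hd, deriv_const_mul_field c]
    linear_combination c * hodeG₀ y
end
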